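/- arXiv:2209.08408 — 6 statements merged into one kernel-verified Lean document; each statement's English description precedes it below -/
import Mathlib

section
/- Every path P_n with n ≥ 3 vertices admits a strongly antimagic labeling, i.e., a bijection f from its n-1 edges to {1,...,n-1} such that the vertex sums φ_f(v) = Σ_{v∈e} f(e) are pairwise distinct and φ_f(u) > φ_f(v) whenever deg(u) > deg(v). -/
open Finset

open scoped Classical

noncomputable section

variable {V : Type*} [Fintype V] [DecidableEq V]

/-- The finset of edges of a simple graph on a finite vertex type. -/
def edges (G : SimpleGraph V) : Finset (Sym2 V) :=
  Finset.univ.filter (fun e => e ∈ G.edgeSet)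

/-- The vertex sum `φ_f(v)`: the sum of the labels of the edges incident to `v`. -/
def phi (G : SimpleGraph V) (f : Sym2 V → ℕ) (v : V) : ℕ :=
  ∑ e ∈ (edges G).filter (fun e => v ∈ e), f e

/-- The degree of a vertex: the number of edges incident to it. -/
def deg (G : SimpleGraph V) (v : V) : ℕ :=
  ((edges G).filter (fun e => v ∈ e)).card

/-- `f` is a strongly antimagic labeling of `G`: a bijection from the edge set onto
`{1, …, m}` with pairwise distinct vertex sums, such that larger degree forces a
larger vertex sum. -/
def IsStronglyAntimagicLabeling (G : SimpleGraph V) (f : Sym2 V → ℕ) : Prop :=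
  Set.BijOn f (edges G : Set (Sym2 V)) (Set.Icc 1 (edges G).card) ∧
  (∀ u v : V, u ≠ v → phi G f u ≠ phi G f v) ∧
  (∀ u v : V, deg G v < deg G u → phi G f v < phi G f u)

/-- A graph is strongly antimagic if it admits a strongly antimagic labeling. -/
def IsStronglyAntimagic (G : SimpleGraph V) : Prop :=
  ∃ f : Sym2 V → ℕ, IsStronglyAntimagicLabeling G f

/-! Along the path the edges receive the labels `1, 3, 5, …, 6, 4, 2`. The two leaves then get
the vertex sums `1` and `2`, while every interior vertex gets a sum of two distinct labels, hence
at least `3`. The interior sums are `4, 8, 12, …` on the ascending half, one odd value at the turn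
and `…, 14, 10, 6` on the descending half, so they are pairwise distinct. -/

namespace SimpleGraph

variable (G : SimpleGraph V)

theorem filter_mem_edges_eq_incidenceFinset (v : V) :
    (edges G).filter (fun e => v ∈ e) = G.incidenceFinset v := by
  ext e
  simp [edges, mem_incidenceFinset, incidenceSet]

theorem phi_eq_sum_incidenceFinset (f : Sym2 V → ℕ) (v : V) :
    phi G f v = ∑ e ∈ G.incidenceFinset v, f e := by
  rw [phi, filter_mem_edges_eq_incidenceFinset]

theorem deg_eq_card_incidenceFinset (v : V) : deg G v = (G.incidenceFinset v).card := by
  rw [deg, filter_mem_edges_eq_incidenceFinset]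

end SimpleGraph

open SimpleGraph

section PathGraph

variable {n : ℕ}

def pathEdgeIndex : Sym2 (Fin n) → ℕ :=
  Sym2.lift ⟨fun u v => min u.val v.val, fun _ _ => min_comm _ _⟩

theorem pathEdgeIndex_mk {u v : Fin n} (h : u.val + 1 = v.val) :
    pathEdgeIndex s(u, v) = u.val := by
  simp [pathEdgeIndex]
  omega

theorem mk_mem_edges_pathGraph {u v : Fin n} :
    s(u, v) ∈ edges (pathGraph n) ↔ u.val + 1 = v.val ∨ v.val + 1 = u.val := by
  simp [edges, pathGraph_adj]

theorem bijOn_pathEdgeIndex (m : ℕ) :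
    Set.BijOn pathEdgeIndex (edges (pathGraph (m + 1)) : Set (Sym2 (Fin (m + 1))))
      (Set.Iio m) := by
  refine ⟨?_, ?_, ?_⟩
  · intro e he
    induction e using Sym2.ind with
    | h u v =>
      rw [mem_coe, mk_mem_edges_pathGraph] at he
      simp [pathEdgeIndex]
      omega
  · intro e he e' he'
    induction e using Sym2.ind with
    | h u v =>
    induction e' using Sym2.ind with
    | h u' v' =>
      rw [mem_coe, mk_mem_edges_pathGraph] at he he'
      simp [pathEdgeIndex, Fin.ext_iff]
      omega
  · intro i hi
    rw [Set.mem_Iio] at hi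
    refine ⟨s(⟨i, by omega⟩, ⟨i + 1, by omega⟩), ?_, pathEdgeIndex_mk rfl⟩
    rw [mem_coe, mk_mem_edges_pathGraph]
    simp

theorem card_edges_pathGraph (m : ℕ) : (edges (pathGraph (m + 1))).card = m := by
  have h := bijOn_pathEdgeIndex m
  simpa using card_nbij (t := range m) _ (by simpa using h.mapsTo) h.injOn
    (by simpa using h.surjOn)

theorem incidenceFinset_pathGraph_of_val_eq_zero {v w : Fin n} (hv : v.val = 0)
    (hw : v.val + 1 = w.val) : (pathGraph n).incidenceFinset v = {s(v, w)} := by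
  ext e
  induction e using Sym2.ind with
  | h a b =>
    simp [mem_incidenceFinset, incidenceSet, pathGraph_adj, Fin.ext_iff]
    omega

theorem incidenceFinset_pathGraph_of_val_add_one_eq {u v : Fin n} (hv : v.val + 1 = n)
    (hu : u.val + 1 = v.val) : (pathGraph n).incidenceFinset v = {s(u, v)} := by
  ext e
  induction e using Sym2.ind with
  | h a b =>
    simp [mem_incidenceFinset, incidenceSet, pathGraph_adj, Fin.ext_iff]
    omega

theorem incidenceFinset_pathGraph_of_interior {u v w : Fin n} (hu : u.val + 1 = v.val)
    (hw : v.val + 1 = w.val) : (pathGraph n).incidenceFinset v = {s(u, v), s(v, w)} := by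
  ext e
  induction e using Sym2.ind with
  | h a b =>
    simp [mem_incidenceFinset, incidenceSet, pathGraph_adj, Fin.ext_iff]
    omega

end PathGraph

section PathLabeling

variable {m : ℕ}

theorem pathGraph_vertex_cases (g : ℕ → ℕ) (hm : 1 ≤ m) (v : Fin (m + 1)) :
    (v.val = 0 ∧ phi (pathGraph (m + 1)) (g ∘ pathEdgeIndex) v = g 0 ∧
        deg (pathGraph (m + 1)) v = 1) ∨
      (v.val = m ∧ phi (pathGraph (m + 1)) (g ∘ pathEdgeIndex) v = g (m - 1) ∧
        deg (pathGraph (m + 1)) v = 1) ∨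
      (v.val ∈ Set.Ioo 0 m ∧
        phi (pathGraph (m + 1)) (g ∘ pathEdgeIndex) v = g (v.val - 1) + g v.val ∧
        deg (pathGraph (m + 1)) v = 2) := by
  rw [phi_eq_sum_incidenceFinset, deg_eq_card_incidenceFinset]
  have hv := v.isLt
  by_cases h0 : v.val = 0
  · have hw : v.val + 1 = (⟨1, by omega⟩ : Fin (m + 1)).val := by simp [h0]
    rw [incidenceFinset_pathGraph_of_val_eq_zero h0 hw]
    simp [pathEdgeIndex_mk hw, h0]
  by_cases hlast : v.val = m
  · have hu : (⟨m - 1, by omega⟩ : Fin (m + 1)).val + 1 = v.val := by simp; omega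
    rw [incidenceFinset_pathGraph_of_val_add_one_eq (by omega) hu]
    simp [pathEdgeIndex_mk hu, hlast]
  set u : Fin (m + 1) := ⟨v.val - 1, by omega⟩
  set w : Fin (m + 1) := ⟨v.val + 1, by omega⟩
  have hu : u.val + 1 = v.val := by simp [u]; omega
  have hw : v.val + 1 = w.val := rfl
  have hne : s(u, v) ≠ s(v, w) := by simp [u, w, Fin.ext_iff]
  rw [incidenceFinset_pathGraph_of_interior hu hw, sum_pair hne, card_pair hne]
  refine Or.inr (Or.inr ⟨Set.mem_Ioo.2 ⟨by omega, by omega⟩, ?_, rfl⟩)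
  simp [pathEdgeIndex_mk hu, pathEdgeIndex_mk hw, u]

theorem isStronglyAntimagicLabeling_pathGraph {g : ℕ → ℕ} (hm : 2 ≤ m)
    (hg : Set.BijOn g (Set.Iio m) (Set.Icc 1 m))
    (hinterior : Set.InjOn (fun j => g (j - 1) + g j) (Set.Ioo 0 m))
    (hleaf : ∀ j ∈ Set.Ioo 0 m, max (g 0) (g (m - 1)) < g (j - 1) + g j) :
    IsStronglyAntimagicLabeling (pathGraph (m + 1)) (g ∘ pathEdgeIndex) := by
  refine ⟨?_, ?_, ?_⟩
  · rw [card_edges_pathGraph]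
    exact hg.comp (bijOn_pathEdgeIndex m)
  · intro u v huv
    have hval : u.val ≠ v.val := Fin.val_ne_of_ne huv
    have hends : g 0 ≠ g (m - 1) := fun h => by
      have := hg.injOn (by simp; omega) (by simp; omega) h
      omega
    rcases pathGraph_vertex_cases g (by omega) u with
        ⟨hu, hpu, -⟩ | ⟨hu, hpu, -⟩ | ⟨hu, hpu, -⟩ <;>
      rcases pathGraph_vertex_cases g (by omega) v with
        ⟨hv, hpv, -⟩ | ⟨hv, hpv, -⟩ | ⟨hv, hpv, -⟩ <;>
      rw [hpu, hpv]
    all_goals first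
      | omega
      | exact fun h => hval (hinterior hu hv h)
      | have := hleaf _ hu; omega
      | have := hleaf _ hv; omega
  · intro u v hdeg
    have hv := pathGraph_vertex_cases g (by omega) v
    rcases pathGraph_vertex_cases g (by omega) u with ⟨-, -, hdu⟩ | ⟨-, -, hdu⟩ | ⟨hu, hpu, hdu⟩
    · rcases hv with ⟨-, -, hdv⟩ | ⟨-, -, hdv⟩ | ⟨-, -, hdv⟩ <;> omega
    · rcases hv with ⟨-, -, hdv⟩ | ⟨-, -, hdv⟩ | ⟨-, -, hdv⟩ <;> omega
    · have := hleaf _ hu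
      rcases hv with ⟨-, hpv, -⟩ | ⟨-, hpv, -⟩ | ⟨-, -, hdv⟩ <;> omega

end PathLabeling

def zigzag (m i : ℕ) : ℕ := if i < (m + 1) / 2 then 2 * i + 1 else 2 * (m - i)

theorem bijOn_zigzag (m : ℕ) : Set.BijOn (zigzag m) (Set.Iio m) (Set.Icc 1 m) := by
  refine ⟨fun i hi => ?_, fun i hi j hj h => ?_, fun k hk => ?_⟩
  · simp only [Set.mem_Iio, Set.mem_Icc, zigzag] at hi ⊢
    split_ifs <;> omega
  · simp only [Set.mem_Iio, zigzag] at hi hj h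
    split_ifs at h <;> omega
  · rw [Set.mem_Icc] at hk
    rcases Nat.even_or_odd k with ⟨t, rfl⟩ | ⟨t, rfl⟩
    · exact ⟨m - t, by rw [Set.mem_Iio]; omega, by rw [zigzag]; split_ifs <;> omega⟩
    · exact ⟨t, by rw [Set.mem_Iio]; omega, by rw [zigzag]; split_ifs <;> omega⟩

theorem injOn_zigzag_add_zigzag (m : ℕ) :
    Set.InjOn (fun j => zigzag m (j - 1) + zigzag m j) (Set.Ioo 0 m) := by
  intro j hj k hk h
  simp only [Set.mem_Ioo, zigzag] at hj hk h
  split_ifs at h <;> omega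

theorem max_zigzag_lt_zigzag_add_zigzag (m : ℕ) :
    ∀ j ∈ Set.Ioo 0 m, max (zigzag m 0) (zigzag m (m - 1)) < zigzag m (j - 1) + zigzag m j := by
  intro j hj
  simp only [Set.mem_Ioo, zigzag] at hj ⊢
  split_ifs <;> omega

/-- Every path `P n` with `n ≥ 3` vertices is strongly antimagic. -/
theorem stmt_0 (n : ℕ) (hn : 3 ≤ n) :
    IsStronglyAntimagic (SimpleGraph.pathGraph n) := by
  obtain ⟨m, rfl⟩ : ∃ m, n = m + 1 := ⟨n - 1, by omega⟩
  exact ⟨_, isStronglyAntimagicLabeling_pathGraph (by omega) (bijOn_zigzag m)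
    (injOn_zigzag_add_zigzag m) (max_zigzag_lt_zigzag_add_zigzag m)⟩
end
end

section
/- Let G be a graph with minimum degree at least 1 and a strongly antimagic labeling f inducing the vertex ordering v_1, ..., v_n by increasing φ-value. Suppose j satisfies either deg(v_{j+1}) < deg(v_{j+2}) or j+1 = n. Then the graph G* obtained from G by adding a new vertex v* together with the edge v* v_{j+1} is strongly antimagic; moreover G* has a strongly antimagic labeling whose induced ordering on V(G) agrees with that of f, with v* placed first. -/
/-!
Label the pendant edge `v* v_{j+1}` with `1` and shift every label of `G` up by one. A vertex `u`
of `G` then gets the new vertex sum `φ_f(u) + deg_{G*}(u)`, while `v*` gets `1`, below all others.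
Along the ordering of `f` the degrees in `G` are nondecreasing, and the hypothesis on `j` says
exactly that they stay nondecreasing when the degree of `v_{j+1}` goes up by one. Hence the new
sums increase strictly along `v*, v_1, …, v_n`, an ordering along which the degrees in `G*` are
nondecreasing, and that is all a strongly antimagic labeling needs.
-/

open Finset

open scoped Classical

noncomputable section

variable {V : Type*} [Fintype V] [DecidableEq V]

/-- Add a pendant edge at `x`: a new vertex (`none`) joined to `some x`. -/
def addPendant (G : SimpleGraph V) (x : V) : SimpleGraph (Option V) :=
  SimpleGraph.fromEdgeSet ((Sym2.map some '' G.edgeSet) ∪ {s((none : Option V), some x)})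

end

section Enumeration

variable {W ι α β : Type*} [LinearOrder ι] [LinearOrder α] [LinearOrder β]
  {φ : W → α} {d : W → β}

theorem monotone_comp_of_strictMono_comp {v : ι → W} (hφ : StrictMono (φ ∘ v))
    (hd : ∀ a b, d b < d a → φ b < φ a) : Monotone (d ∘ v) := by
  intro i k hik
  by_contra! h
  exact (hd _ _ h).not_ge (hφ.monotone hik)

theorem lt_of_lt_of_strictMono_comp {w : ι → W} (hw : Function.Surjective w)
    (hφ : StrictMono (φ ∘ w)) (hd : Monotone (d ∘ w)) {a b : W} (h : d b < d a) :
    φ b < φ a := by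
  obtain ⟨i, rfl⟩ := hw a
  obtain ⟨k, rfl⟩ := hw b
  exact hφ (lt_of_not_ge fun hik => h.not_ge (hd hik))

end Enumeration

theorem Monotone.add_ite_eq_of_lt {ι : Type*} [PartialOrder ι] [DecidableEq ι] {d : ι → ℕ}
    (hd : Monotone d) {j : ι} (hj : ∀ k, j < k → d j < d k) :
    Monotone fun i => d i + if i = j then 1 else 0 := by
  intro i k hik
  by_cases hij : i = j
  · subst hij
    by_cases hki : k = i
    · simp [hki]
    · simpa [hki] using hj k (lt_of_le_of_ne hik (Ne.symm hki))
  · simpa [hij] using (hd hik).trans (Nat.le_add_right _ _)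

section PendantEdge

variable {V : Type*}

theorem Sym2.none_notMem_map_some (e : Sym2 V) : (none : Option V) ∉ e.map some := by
  simp [Sym2.mem_map]

theorem Sym2.some_mem_map_some {u : V} {e : Sym2 V} : some u ∈ e.map some ↔ u ∈ e := by
  simp [Sym2.mem_map]

theorem edgeSet_addPendant (G : SimpleGraph V) (x : V) :
    (addPendant G x).edgeSet = Sym2.map some '' G.edgeSet ∪ {s((none : Option V), some x)} := by
  rw [addPendant, SimpleGraph.edgeSet_fromEdgeSet, sdiff_eq_left, Set.disjoint_left]
  rintro e (⟨e', he', rfl⟩ | rfl) hd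
  · exact G.not_isDiag_of_mem_edgeSet he' ((Sym2.isDiag_map (Option.some_injective V)).1 hd)
  · simp at hd

variable [DecidableEq V]

theorem pendantEdge_notMem_image (x : V) (s : Finset (Sym2 V)) :
    s((none : Option V), some x) ∉ s.image (Sym2.map some) := by
  simp only [mem_image, not_exists, not_and]
  intro e _ he
  exact Sym2.none_notMem_map_some e (he ▸ Sym2.mem_mk_left _ _)

variable (f : Sym2 V → ℕ) (x : V)

def pendantLabel : Sym2 (Option V) → ℕ :=
  fun e => if none ∈ e then 1 else f (e.map fun o => o.getD x) + 1

theorem pendantLabel_map_some (e : Sym2 V) : pendantLabel f x (e.map some) = f e + 1 := by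
  simp [pendantLabel, Sym2.map_map]

theorem pendantLabel_pendantEdge : pendantLabel f x s(none, some x) = 1 := by
  simp [pendantLabel]

end PendantEdge

theorem mem_edges {V : Type*} [Fintype V] {G : SimpleGraph V} {e : Sym2 V} :
    e ∈ edges G ↔ e ∈ G.edgeSet := by
  simp [edges]

variable {V : Type*} [Fintype V] [DecidableEq V]

theorem deg_le_phi {G : SimpleGraph V} {f : Sym2 V → ℕ} (hf : ∀ e ∈ edges G, 1 ≤ f e)
    (u : V) :
    deg G u ≤ phi G f u := by
  simpa [deg, phi] using card_nsmul_le_sum _ f 1 fun e he => hf e (mem_filter.1 he).1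

theorem IsStronglyAntimagicLabeling.monotone_deg_comp {G : SimpleGraph V} {f : Sym2 V → ℕ}
    (hf : IsStronglyAntimagicLabeling G f) {ι : Type*} [LinearOrder ι] {v : ι → V}
    (hv : StrictMono (phi G f ∘ v)) : Monotone (deg G ∘ v) :=
  monotone_comp_of_strictMono_comp hv hf.2.2

theorem isStronglyAntimagicLabeling_of_enumeration {G : SimpleGraph V} {f : Sym2 V → ℕ}
    (hf : Set.BijOn f (edges G : Set (Sym2 V)) (Set.Icc 1 (edges G).card))
    {ι : Type*} [LinearOrder ι] {v : ι → V} (hv : Function.Surjective v)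
    (hφ : StrictMono (phi G f ∘ v)) (hd : Monotone (deg G ∘ v)) :
    IsStronglyAntimagicLabeling G f :=
  ⟨hf, fun _ _ => (hφ.injective.of_comp_right hv).ne,
    fun _ _ => lt_of_lt_of_strictMono_comp hv hφ hd⟩

section AddPendant

variable (G : SimpleGraph V) (x : V)

theorem edges_addPendant :
    edges (addPendant G x) = insert s(none, some x) ((edges G).image (Sym2.map some)) := by
  ext e
  simp [mem_edges, edgeSet_addPendant]

theorem card_edges_addPendant : (edges (addPendant G x)).card = (edges G).card + 1 := by
  rw [edges_addPendant, card_insert_of_notMem (pendantEdge_notMem_image x _),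
    card_image_of_injective _ (Sym2.map.injective (Option.some_injective V))]

theorem incidentEdges_addPendant_some (u : V) :
    (edges (addPendant G x)).filter (fun e => some u ∈ e) =
      if u = x then
        insert s(none, some x) (((edges G).filter (fun e => u ∈ e)).image (Sym2.map some))
      else ((edges G).filter (fun e => u ∈ e)).image (Sym2.map some) := by
  simp only [edges_addPendant, filter_insert, filter_image, Sym2.some_mem_map_some]
  simp [eq_comm]

theorem incidentEdges_addPendant_none :
    (edges (addPendant G x)).filter (fun e => none ∈ e) = {s(none, some x)} := by
  simp [edges_addPendant, filter_insert, filter_image]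

theorem deg_addPendant_some (u : V) :
    deg (addPendant G x) (some u) = deg G u + if u = x then 1 else 0 := by
  rw [deg, incidentEdges_addPendant_some]
  split_ifs
  · rw [card_insert_of_notMem (pendantEdge_notMem_image x _), card_image_of_injective _
      (Sym2.map.injective (Option.some_injective V)), deg]
  · rw [card_image_of_injective _ (Sym2.map.injective (Option.some_injective V)), deg, add_zero]

theorem deg_addPendant_none : deg (addPendant G x) none = 1 := by
  rw [deg, incidentEdges_addPendant_none, card_singleton]

variable (f : Sym2 V → ℕ)

theorem bijOn_pendantLabel
    (hf : Set.BijOn f (edges G : Set (Sym2 V)) (Set.Icc 1 (edges G).card)) :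
    Set.BijOn (pendantLabel f x) (edges (addPendant G x) : Set (Sym2 (Option V)))
      (Set.Icc 1 (edges (addPendant G x)).card) := by
  have hshift : Set.BijOn (pendantLabel f x ∘ Sym2.map some) (edges G : Set (Sym2 V))
      (Set.Icc (1 + 1) ((edges G).card + 1)) := by
    rw [show pendantLabel f x ∘ Sym2.map some = (· + 1) ∘ f from
      funext (pendantLabel_map_some f x)]
    exact (Set.Icc_add_bij 1 (edges G).card 1).comp hf
  rw [Set.bijOn_comp_iff (Sym2.map.injective (Option.some_injective V)).injOn] at hshift
  rw [card_edges_addPendant, edges_addPendant, coe_insert, coe_image,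
    ← Set.insert_Icc_add_one_left_eq_Icc (by omega : 1 ≤ (edges G).card + 1)]
  simpa only [pendantLabel_pendantEdge] using hshift.insert (f := pendantLabel f x)
    (a := s(none, some x)) (by simp [pendantLabel_pendantEdge])

theorem phi_addPendant_some (u : V) :
    phi (addPendant G x) (pendantLabel f x) (some u) =
      phi G f u + deg (addPendant G x) (some u) := by
  have himage : ∑ e ∈ ((edges G).filter (fun e => u ∈ e)).image (Sym2.map some),
      pendantLabel f x e = phi G f u + deg G u := by
    rw [sum_image fun _ _ _ _ h => Sym2.map.injective (Option.some_injective V) h]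
    simp [pendantLabel_map_some, sum_add_distrib, phi, deg]
  rw [phi, incidentEdges_addPendant_some, deg_addPendant_some]
  split_ifs
  · rw [sum_insert (pendantEdge_notMem_image x _), himage, pendantLabel_pendantEdge]
    ring
  · rw [himage, add_zero]

theorem phi_addPendant_none : phi (addPendant G x) (pendantLabel f x) none = 1 := by
  rw [phi, incidentEdges_addPendant_none, sum_singleton, pendantLabel_pendantEdge]

theorem deg_addPendant_none_le_some {u : V} (hu : 1 ≤ deg G u) :
    deg (addPendant G x) none ≤ deg (addPendant G x) (some u) := by
  rw [deg_addPendant_none, deg_addPendant_some]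
  exact hu.trans (Nat.le_add_right _ _)

theorem phi_addPendant_none_lt_some (hf : ∀ e ∈ edges G, 1 ≤ f e) {u : V}
    (hu : 1 ≤ deg G u) :
    phi (addPendant G x) (pendantLabel f x) none <
      phi (addPendant G x) (pendantLabel f x) (some u) := by
  rw [phi_addPendant_none, phi_addPendant_some, deg_addPendant_some]
  have := deg_le_phi hf u
  omega

end AddPendant

theorem stmt_1_general (G : SimpleGraph V) (hdelta : ∀ w : V, 1 ≤ deg G w)
    (f : Sym2 V → ℕ) (hf : IsStronglyAntimagicLabeling G f)
    (n : ℕ)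
    (v : Fin n → V) (hv : Function.Bijective v)
    (hmono : StrictMono (fun i : Fin n => phi G f (v i)))
    (j : Fin n)
    (hj : (j : ℕ) + 1 = n ∨
      ∃ h : (j : ℕ) + 1 < n, deg G (v j) < deg G (v ⟨(j : ℕ) + 1, h⟩)) :
    IsStronglyAntimagic (addPendant G (v j)) ∧
    ∃ g : Sym2 (Option V) → ℕ,
      IsStronglyAntimagicLabeling (addPendant G (v j)) g ∧
      StrictMono (fun i : Fin n => phi (addPendant G (v j)) g (some (v i))) ∧
      ∀ i : Fin n, phi (addPendant G (v j)) g none < phi (addPendant G (v j)) g (some (v i)) := by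
  set H := addPendant G (v j)
  set g := pendantLabel f (v j)
  have hdeg : Monotone fun i => deg G (v i) := hf.monotone_deg_comp hmono
  have hjump : ∀ k, j < k → deg G (v j) < deg G (v k) := by
    intro k hjk
    rcases hj with hlast | ⟨_, hlt⟩
    · exact absurd k.isLt (by omega)
    · exact hlt.trans_le (hdeg (Fin.le_iff_val_le_val.2 hjk))
  have hdeg' : Monotone fun i => deg H (some (v i)) := by
    simp only [H, deg_addPendant_some, hv.1.eq_iff]
    exact hdeg.add_ite_eq_of_lt hjump
  have hφ : StrictMono fun i => phi H g (some (v i)) := by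
    simpa only [g, H, phi_addPendant_some] using hmono.add_monotone hdeg'
  have hnone : ∀ u, phi H g none < phi H g (some u) := fun u =>
    phi_addPendant_none_lt_some G (v j) f (fun e he => (hf.1.mapsTo he).1) (hdelta u)
  have hg : IsStronglyAntimagicLabeling H g :=
    isStronglyAntimagicLabeling_of_enumeration (bijOn_pendantLabel G (v j) f hf.1)
      (ι := WithBot (Fin n)) (v := Equiv.optionCongr (Equiv.ofBijective v hv))
      (Equiv.surjective _) (WithBot.strictMono_iff.2 ⟨hφ, fun i => hnone (v i)⟩)
      (WithBot.monotone_iff.2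
        ⟨hdeg', fun i => deg_addPendant_none_le_some G (v j) (hdelta (v i))⟩)
  exact ⟨⟨g, hg⟩, g, hg, hφ, fun i => hnone (v i)⟩

/-- pendant-edge extension at the vertex `v j` (the paper's `v_{j+1}`),
assuming either `v j` is last in the ordering or its degree is strictly smaller than
that of the next vertex in the ordering. -/
theorem stmt_1 (G : SimpleGraph V) (hdelta : ∀ w : V, 1 ≤ deg G w)
    (f : Sym2 V → ℕ) (hf : IsStronglyAntimagicLabeling G f)
    (n : ℕ) (hn : n = Fintype.card V)
    (v : Fin n → V) (hv : Function.Bijective v)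
    (hmono : StrictMono (fun i : Fin n => phi G f (v i)))
    (j : Fin n)
    (hj : (j : ℕ) + 1 = n ∨
      ∃ h : (j : ℕ) + 1 < n, deg G (v j) < deg G (v ⟨(j : ℕ) + 1, h⟩)) :
    IsStronglyAntimagic (addPendant G (v j)) ∧
    ∃ g : Sym2 (Option V) → ℕ,
      IsStronglyAntimagicLabeling (addPendant G (v j)) g ∧
      StrictMono (fun i : Fin n => phi (addPendant G (v j)) g (some (v i))) ∧
      ∀ i : Fin n, phi (addPendant G (v j)) g none < phi (addPendant G (v j)) g (some (v i)) :=
  stmt_1_general G hdelta f hf n v hv hmono j hj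
end

section
/- Let G be a graph with minimum degree at least 1 and a strongly antimagic labeling f inducing the vertex ordering v_1, ..., v_n by increasing φ-value. Suppose j satisfies either deg(v_{j+1}) < deg(v_{j+2}) or j+1 = n, and v_j v_{j+1} is not an edge of G. Then the graph G* = G + v_j v_{j+1} is strongly antimagic, with a strongly antimagic labeling preserving the ordering induced by f on V(G). -/
open Finset

open scoped Classical

noncomputable section

variable {V : Type*} [Fintype V] [DecidableEq V]

/-- Add the edge `ab` to `G`. -/
def addEdge (G : SimpleGraph V) (a b : V) : SimpleGraph V :=
  G ⊔ SimpleGraph.fromEdgeSet {s(a, b)}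

/-- adding the edge `v_j v_{j+1}` (0-indexed: `v j` and `v ⟨j+1⟩`),
assuming `v_{j+1}` is last or has degree strictly smaller than `v_{j+2}`,
and `v_j v_{j+1} ∉ E(G)`, keeps the graph strongly antimagic, with a labeling
preserving the ordering induced by `f`. -/
theorem stmt_2 (G : SimpleGraph V) (hdelta : ∀ w : V, 1 ≤ deg G w)
    (f : Sym2 V → ℕ) (hf : IsStronglyAntimagicLabeling G f)
    (n : ℕ) (hn : n = Fintype.card V)
    (v : Fin n → V) (hv : Function.Bijective v)
    (hmono : StrictMono (fun i : Fin n => phi G f (v i)))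
    (j : Fin n) (hj1 : (j : ℕ) + 1 < n)
    (hnadj : ¬ G.Adj (v j) (v ⟨(j : ℕ) + 1, hj1⟩))
    (hj : (j : ℕ) + 2 = n ∨
      ∃ h : (j : ℕ) + 2 < n,
        deg G (v ⟨(j : ℕ) + 1, hj1⟩) < deg G (v ⟨(j : ℕ) + 2, h⟩)) :
    IsStronglyAntimagic (addEdge G (v j) (v ⟨(j : ℕ) + 1, hj1⟩)) ∧
    ∃ g : Sym2 V → ℕ,
      IsStronglyAntimagicLabeling (addEdge G (v j) (v ⟨(j : ℕ) + 1, hj1⟩)) g ∧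
      StrictMono (fun i : Fin n => phi (addEdge G (v j) (v ⟨(j : ℕ) + 1, hj1⟩)) g (v i)) := by
  classical
  obtain ⟨hbij, hdist, hdegc⟩ := hf
  set j1 : Fin n := ⟨(j : ℕ) + 1, hj1⟩ with hj1def
  have hjj1 : j < j1 := by
    rw [Fin.lt_def]; simp [hj1def]
  have hab : v j ≠ v j1 := fun h => absurd (hv.1 h) (Fin.ne_of_lt hjj1)
  set a := v j with hadef
  set b := v j1 with hbdef
  set G' := addEdge G a b with hG'
  have hsE : s(a, b) ∉ edges G := by
    simp only [edges, Finset.mem_filter, Finset.mem_univ, true_and,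
      SimpleGraph.mem_edgeSet]
    exact hnadj
  have hE' : edges G' = insert s(a, b) (edges G) := by
    ext e
    simp only [edges, Finset.mem_filter, Finset.mem_univ, true_and, Finset.mem_insert, hG',
      addEdge, SimpleGraph.edgeSet_sup, SimpleGraph.edgeSet_fromEdgeSet, Set.mem_union,
      Set.mem_diff, Set.mem_singleton_iff, Set.mem_setOf_eq]
    constructor
    · rintro (h | ⟨rfl, -⟩)
      · exact Or.inr h
      · exact Or.inl rfl
    · rintro (rfl | h)
      · exact Or.inr ⟨rfl, by simpa using hab⟩
      · exact Or.inl h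
  set g : Sym2 V → ℕ := fun e => if e = s(a, b) then 1 else f e + 1 with hg
  have hfil : ∀ w : V, (edges G').filter (fun e => w ∈ e) =
      if w ∈ s(a, b) then insert s(a, b) ((edges G).filter (fun e => w ∈ e))
      else (edges G).filter (fun e => w ∈ e) := by
    intro w
    rw [hE', Finset.filter_insert]
  have hsfil : ∀ w : V, s(a, b) ∉ (edges G).filter (fun e => w ∈ e) := by
    intro w h
    exact hsE (Finset.mem_of_mem_filter _ h)
  have hdeg' : ∀ w : V, deg G' w = deg G w + (if w ∈ s(a, b) then 1 else 0) := by
    intro w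
    rw [deg, hfil w]
    by_cases h : w ∈ s(a, b)
    · rw [if_pos h, if_pos h, Finset.card_insert_of_notMem (hsfil w)]; rfl
    · rw [if_neg h, if_neg h]; rfl
  have hsum : ∀ w : V, ∑ e ∈ (edges G).filter (fun e => w ∈ e), g e
      = phi G f w + deg G w := by
    intro w
    have : ∀ e ∈ (edges G).filter (fun e => w ∈ e), g e = f e + 1 := by
      intro e he
      have : e ≠ s(a, b) := fun h => hsfil w (h ▸ he)
      simp [hg, this]
    rw [Finset.sum_congr rfl this, Finset.sum_add_distrib, Finset.sum_const, smul_eq_mul,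
      mul_one]
    rfl
  have hphi' : ∀ w : V, phi G' g w = phi G f w + deg G' w := by
    intro w
    rw [phi, hfil w, hdeg' w]
    by_cases h : w ∈ s(a, b)
    · rw [if_pos h, if_pos h, Finset.sum_insert (hsfil w), hsum w]
      simp [hg]; ring
    · rw [if_neg h, if_neg h, hsum w]; omega
  -- degrees are nondecreasing along the ordering
  have hdm : ∀ i k : Fin n, i ≤ k → deg G (v i) ≤ deg G (v k) := by
    intro i k hik
    by_contra h
    push_neg at h
    have h1 := hdegc (v i) (v k) h
    have h2 : phi G f (v i) ≤ phi G f (v k) := hmono.monotone hik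
    omega
  have hmem : ∀ i : Fin n, (v i ∈ s(a, b)) ↔ (i = j ∨ i = j1) := by
    intro i
    rw [Sym2.mem_iff]
    constructor
    · rintro (h | h)
      · exact Or.inl (hv.1 h)
      · exact Or.inr (hv.1 h)
    · rintro (rfl | rfl)
      · exact Or.inl rfl
      · exact Or.inr rfl
  -- new degrees are nondecreasing along the ordering
  have hDm : ∀ i k : Fin n, i ≤ k → deg G' (v i) ≤ deg G' (v k) := by
    intro i k hik
    rw [hdeg' (v i), hdeg' (v k)]
    by_cases hi : v i ∈ s(a, b) <;> by_cases hk : v k ∈ s(a, b)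
    · rw [if_pos hi, if_pos hk]
      have := hdm i k hik; omega
    · rw [if_pos hi, if_neg hk]
      -- need deg G (v i) < deg G (v k)
      have hik' : (i : ℕ) < (k : ℕ) := by
        rcases lt_or_eq_of_le hik with h | h
        · exact h
        · exact absurd (h ▸ hi) hk
      have hknj : k ≠ j ∧ k ≠ j1 := by
        constructor <;> intro h <;> exact hk (h ▸ ((hmem k).2 (by simp [h])))
      have hkj : (j : ℕ) + 2 ≤ (k : ℕ) := by
        have h1 : (k : ℕ) ≠ (j : ℕ) := fun h => hknj.1 (Fin.ext h)
        have h2 : (k : ℕ) ≠ (j : ℕ) + 1 := fun h => hknj.2 (Fin.ext h)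
        have hiv : (i : ℕ) = (j : ℕ) ∨ (i : ℕ) = (j : ℕ) + 1 := by
          rcases (hmem i).1 hi with rfl | rfl
          · exact Or.inl rfl
          · exact Or.inr rfl
        omega
      obtain h | ⟨h2, hd2⟩ := hj
      · have := k.isLt; omega
      · have hbk : deg G (v (⟨(j : ℕ) + 2, h2⟩ : Fin n)) ≤ deg G (v k) :=
          hdm _ _ (by rw [Fin.le_def]; exact hkj)
        have hib : deg G (v i) ≤ deg G (v j1) := by
          rcases (hmem i).1 hi with rfl | rfl
          · exact hdm _ _ hjj1.le
          · exact le_refl _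
        have hbb : deg G b = deg G (v j1) := rfl
        omega
    · rw [if_neg hi, if_pos hk]
      have := hdm i k hik; omega
    · rw [if_neg hi, if_neg hk]
      exact hdm i k hik
  -- the new vertex sums are strictly increasing along the ordering
  have hΦ : StrictMono (fun i : Fin n => phi G' g (v i)) := by
    intro i k hik
    simp only [hphi']
    have h1 := hmono hik
    have h2 := hDm i k hik.le
    simp only at h1
    omega
  -- bijectivity of g
  have hcard : (edges G').card = (edges G).card + 1 := by
    rw [hE', Finset.card_insert_of_notMem hsE]
  have hgbij : Set.BijOn g (edges G' : Set (Sym2 V)) (Set.Icc 1 (edges G').card) := by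
    rw [hcard]
    refine ⟨?_, ?_, ?_⟩
    · intro e he
      rw [Finset.mem_coe, hE', Finset.mem_insert] at he
      rcases he with rfl | he
      · simp [hg]
      · have hne : e ≠ s(a, b) := fun h => hsE (h ▸ he)
        have := hbij.1 (Finset.mem_coe.2 he)
        simp only [Set.mem_Icc] at this ⊢
        simp only [hg, if_neg hne]
        omega
    · intro e1 h1 e2 h2 heq
      rw [Finset.mem_coe, hE', Finset.mem_insert] at h1 h2
      rcases h1 with rfl | h1 <;> rcases h2 with rfl | h2
      · rfl
      · have hne : e2 ≠ s(a, b) := fun h => hsE (h ▸ h2)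
        simp only [hg, if_pos rfl, if_neg hne] at heq
        have := hbij.1 (Finset.mem_coe.2 h2)
        simp only [Set.mem_Icc] at this
        omega
      · have hne : e1 ≠ s(a, b) := fun h => hsE (h ▸ h1)
        simp only [hg, if_pos rfl, if_neg hne] at heq
        have := hbij.1 (Finset.mem_coe.2 h1)
        simp only [Set.mem_Icc] at this
        omega
      · have hne1 : e1 ≠ s(a, b) := fun h => hsE (h ▸ h1)
        have hne2 : e2 ≠ s(a, b) := fun h => hsE (h ▸ h2)
        simp only [hg, if_neg hne1, if_neg hne2] at heq
        exact hbij.2.1 (Finset.mem_coe.2 h1) (Finset.mem_coe.2 h2) (by omega)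
    · intro y hy
      simp only [Set.mem_Icc] at hy
      rcases Nat.eq_or_lt_of_le hy.1 with h1 | h1
      · exact ⟨s(a, b), by rw [Finset.mem_coe, hE']; exact Finset.mem_insert_self _ _,
          by simp [hg, h1.symm]⟩
      · have : y - 1 ∈ Set.Icc 1 (edges G).card := by
          simp only [Set.mem_Icc]; omega
        obtain ⟨e, he, hfe⟩ := hbij.2.2 this
        rw [Finset.mem_coe] at he
        refine ⟨e, by rw [Finset.mem_coe, hE']; exact Finset.mem_insert_of_mem he, ?_⟩
        have hne : e ≠ s(a, b) := fun h => hsE (h ▸ he)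
        simp only [hg, if_neg hne]
        omega
  have hlab : IsStronglyAntimagicLabeling G' g := by
    refine ⟨hgbij, ?_, ?_⟩
    · intro u w huw
      obtain ⟨iu, rfl⟩ := hv.2 u
      obtain ⟨iw, rfl⟩ := hv.2 w
      have : iu ≠ iw := fun h => huw (congrArg v h)
      exact hΦ.injective.ne this
    · intro u w hdw
      obtain ⟨iu, rfl⟩ := hv.2 u
      obtain ⟨iw, rfl⟩ := hv.2 w
      rcases lt_or_ge iw iu with h | h
      · exact hΦ h
      · exact absurd (hDm iu iw h) (by omega)
  exact ⟨⟨g, hlab⟩, g, hlab, hΦ⟩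
end
end

section
/- Let G be a graph with exactly two vertices u, v of degree 1, and suppose G is strongly antimagic. Then for every integer k ≥ 1, the graph obtained from G by adding a new path of length k between u and v (adding k−1 new internal vertices) is strongly antimagic. -/
open Finset

open scoped Classical

noncomputable section

variable {V : Type*} [Fintype V] [DecidableEq V]

/-- Add a new path of length `k` between `a` and `b`, with `k - 1` new internal
vertices. -/
def addPath (G : SimpleGraph V) (a b : V) (k : ℕ) : SimpleGraph (V ⊕ Fin (k - 1)) :=
  SimpleGraph.fromEdgeSet (
    (Sym2.map Sum.inl '' G.edgeSet)
    ∪ {e | ∃ i j : Fin (k - 1), (j : ℕ) = (i : ℕ) + 1 ∧ e = s(Sum.inr i, Sum.inr j)}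
    ∪ {e | ∃ i : Fin (k - 1), (i : ℕ) = 0 ∧ e = s(Sum.inl a, Sum.inr i)}
    ∪ {e | ∃ i : Fin (k - 1), (i : ℕ) = k - 2 ∧ e = s(Sum.inl b, Sum.inr i)}
    ∪ (if k = 1 then {s(Sum.inl a, Sum.inl b)} else ∅))

/-!
Label the old edges by `f e + k` and the `k` path edges by a permutation `ℓ` of `1, …, k`.
A vertex `v ∉ {a, b}` keeps its degree and gets the sum `φ(v) + k·deg v`; this affine change
preserves the strong antimagic order among these vertices. The vertices `a`, `b` and the internal
path vertices all have degree `2` and sums in `(0, max (f e_a) (f e_b) + 2k]`. Since `a` and `b`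
are the only leaves, every other old vertex is either isolated, with sum `0`, or has degree `≥ 2`
and hence `φ(v) > f e_a, f e_b`, so its new sum exceeds that range. So it only remains to choose
`ℓ` making the `k + 1` sums along the path distinct.
-/

/-- The vertex sum at the `j`-th vertex of a path `v₀ v₁ ⋯ v_k` whose `i`-th edge `vᵢ vᵢ₊₁`
is labelled `ℓ i`, where `v₀` and `v_k` carry the extra weights `x` and `y`. -/
def pathSum (k x y : ℕ) (ℓ : ℕ → ℕ) (j : ℕ) : ℕ :=
  (if j = 0 then x else ℓ (j - 1)) + (if j = k then y else ℓ j)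

lemma pathSum_reverse {k : ℕ} (x y : ℕ) (ℓ : ℕ → ℕ) {j : ℕ} (hj : j ≤ k) :
    pathSum k y x (fun i => ℓ (k - 1 - i)) j = pathSum k x y ℓ (k - j) := by
  have h₁ : j ≠ 0 → k - 1 - (j - 1) = k - j := by omega
  have h₂ : k - 1 - j = k - j - 1 := by omega
  unfold pathSum
  split_ifs <;> first | omega | simp_all [add_comm]

lemma pathSum_pos {k x y : ℕ} {ℓ : ℕ → ℕ} (hk : k ≠ 0) (hℓ : ∀ i < k, 0 < ℓ i) {j : ℕ}
    (hj : j ≤ k) : 0 < pathSum k x y ℓ j := by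
  have := hℓ j
  have := hℓ (j - 1)
  unfold pathSum
  split_ifs <;> omega

lemma pathSum_le {k x y : ℕ} {ℓ : ℕ → ℕ} (hk : k ≠ 0) (hℓ : ∀ i < k, ℓ i ≤ k) (hkx : k ≤ x)
    {j : ℕ} (hj : j ≤ k) : pathSum k x y ℓ j ≤ max x y + k := by
  have := hℓ j
  have := hℓ (j - 1)
  have := le_max_left x y
  have := le_max_right x y
  unfold pathSum
  split_ifs <;> omega

def swapLabel (i : ℕ) : ℕ := if i = 0 then 2 else if i = 1 then 1 else i + 1

lemma bijOn_succ_Iio (k : ℕ) : Set.BijOn (· + 1) (Set.Iio k) (Set.Icc 1 k) := by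
  refine ⟨fun i hi => ?_, fun i _ j _ h => Nat.succ_injective h, fun y hy => ⟨y - 1, ?_, ?_⟩⟩ <;>
    simp only [Set.mem_Iio, Set.mem_Icc] at * <;> omega

lemma bijOn_swapLabel {k : ℕ} (hk : 2 ≤ k) : Set.BijOn swapLabel (Set.Iio k) (Set.Icc 1 k) := by
  refine ⟨fun i hi => ?_, fun i _ j _ h => ?_,
    fun y hy => ⟨if y = 1 then 1 else if y = 2 then 0 else y - 1, ?_, ?_⟩⟩
  all_goals simp only [swapLabel, Set.mem_Iio, Set.mem_Icc] at *
  all_goals split_ifs at * <;> omega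

lemma injOn_pathSum_succ {k x y : ℕ} (hxy : x < y) (hkx : k < x)
    (hx : x % 2 = 1 ∨ 2 * k < x + 2) : Set.InjOn (pathSum k x y (· + 1)) (Set.Iic k) := by
  intro i hi j hj h
  simp only [pathSum, Set.mem_Iic] at *
  split_ifs at h <;> omega

lemma injOn_pathSum_swapLabel {k x y : ℕ} (hxy : x < y) (hkx : k < x)
    (hx : x % 2 = 0) (hxk : x + 2 ≤ 2 * k) : Set.InjOn (pathSum k x y swapLabel) (Set.Iic k) := by
  intro i hi j hj h
  simp only [pathSum, swapLabel, Set.mem_Iic] at *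
  split_ifs at h <;> omega

/- With the labels `1, 2, …, k` the internal sums are the odd numbers `3, 5, …, 2k - 1`, and
`y + k` exceeds them all; only `x + 1` can collide with one of them. In that case the labels
`2, 1, 3, 4, …, k` give the internal sums `3, 4, 7, 9, …, 2k - 1` and the end sums `x + 2`,
`y + k`. -/
lemma exists_pathLabel_of_lt {k x y : ℕ} (hxy : x < y) (hkx : k < x) :
    ∃ ℓ : ℕ → ℕ, Set.BijOn ℓ (Set.Iio k) (Set.Icc 1 k) ∧
      Set.InjOn (pathSum k x y ℓ) (Set.Iic k) := by
  by_cases hx : x % 2 = 0 ∧ x + 2 ≤ 2 * k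
  · exact ⟨swapLabel, bijOn_swapLabel (by omega), injOn_pathSum_swapLabel hxy hkx hx.1 hx.2⟩
  · exact ⟨(· + 1), bijOn_succ_Iio k, injOn_pathSum_succ hxy hkx (by omega)⟩

lemma exists_pathLabel {k x y : ℕ} (hxy : x ≠ y) (hkx : k < x) (hky : k < y) :
    ∃ ℓ : ℕ → ℕ, Set.BijOn ℓ (Set.Iio k) (Set.Icc 1 k) ∧
      Set.InjOn (pathSum k x y ℓ) (Set.Iic k) := by
  rcases hxy.lt_or_gt with h | h
  · exact exists_pathLabel_of_lt h hkx
  obtain ⟨ℓ, hbij, hinj⟩ := exists_pathLabel_of_lt h hky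
  have hrev : Set.BijOn (k - 1 - ·) (Set.Iio k) (Set.Iio k) := by
    refine Set.InvOn.bijOn (f' := (k - 1 - ·)) ⟨?_, ?_⟩ ?_ ?_ <;> intro i hi <;>
      simp only [Set.mem_Iio] at * <;> omega
  refine ⟨fun i => ℓ (k - 1 - i), hbij.comp hrev, fun i hi j hj hij => ?_⟩
  simp only [Set.mem_Iic] at hi hj
  rw [pathSum_reverse _ _ _ hi, pathSum_reverse _ _ _ hj] at hij
  have := hinj (Nat.sub_le k i) (Nat.sub_le k j) hij
  omega

lemma bijOn_sumElim_disjSum {β γ : Type*} {s : Finset β} {t : Finset γ} {f : β → ℕ}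
    {g : γ → ℕ} {m n : ℕ} (hf : Set.BijOn f s (Set.Icc 1 m)) (hg : Set.BijOn g t (Set.Icc 1 n)) :
    Set.BijOn (Sum.elim (f · + n) g) (s.disjSum t) (Set.Icc 1 (m + n)) := by
  refine ⟨?_, ?_, fun z hz => ?_⟩
  · rintro (x | x) hx <;> simp only [mem_coe, inl_mem_disjSum, inr_mem_disjSum] at hx
    · have := hf.mapsTo hx
      simp only [Sum.elim_inl, Set.mem_Icc] at this ⊢; omega
    · have := hg.mapsTo hx
      simp only [Sum.elim_inr, Set.mem_Icc] at this ⊢; omega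
  · rintro (x | x) hx (x' | x') hx' h <;>
      simp only [mem_coe, inl_mem_disjSum, inr_mem_disjSum, Sum.elim_inl, Sum.elim_inr] at hx hx' h
    · exact congrArg _ (hf.injOn hx hx' (by omega))
    · have := (hf.mapsTo hx).1; have := (hg.mapsTo hx').2; omega
    · have := (hg.mapsTo hx).2; have := (hf.mapsTo hx').1; omega
    · exact congrArg _ (hg.injOn hx hx' h)
  · simp only [Set.mem_Icc] at hz
    by_cases hzn : z ≤ n
    · obtain ⟨x, hx, rfl⟩ := hg.surjOn (Set.mem_Icc.mpr ⟨hz.1, hzn⟩)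
      exact ⟨.inr x, by simpa using hx, rfl⟩
    · obtain ⟨x, hx, hfx⟩ := hf.surjOn (Set.mem_Icc.mpr (show 1 ≤ z - n ∧ z - n ≤ m by omega))
      exact ⟨.inl x, by simpa using hx, show f x + n = z by omega⟩

lemma sum_filter_disjSum {β γ M : Type*} [AddCommMonoid M] (s : Finset β) (t : Finset γ)
    (p : β ⊕ γ → Prop) [DecidablePred p] (L : β ⊕ γ → M) :
    ∑ x ∈ s.disjSum t with p x, L x =
      ∑ x ∈ s with p (.inl x), L (.inl x) + ∑ x ∈ t with p (.inr x), L (.inr x) := by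
  simp only [sum_filter, sum_disjSum]

lemma sum_range_filter_adjacent {k j : ℕ} (hj : j ≤ k) (g : ℕ → ℕ) :
    ∑ i ∈ range k with (j = i ∨ j = i + 1), g i =
      (if j = 0 then 0 else g (j - 1)) + (if j = k then 0 else g j) := by
  have hsplit : ∀ i, (if j = i ∨ j = i + 1 then g i else 0) =
      (if i = j then g i else 0) + (if i + 1 = j then g i else 0) := by
    intro i; split_ifs <;> omega
  have hpred : ∑ i ∈ range k, (if i + 1 = j then g i else 0) =
      if j = 0 then 0 else g (j - 1) := by
    rcases j with _ | j
    · simp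
    · simp only [add_left_inj, sum_ite_eq', mem_range, if_pos (show j < k by omega)]
      simp
  rw [sum_filter, sum_congr rfl fun i _ => hsplit i, sum_add_distrib, sum_ite_eq', hpred]
  simp only [mem_range]
  split_ifs <;> omega

def Concordant (p q : ℕ × ℕ) : Prop :=
  p.1 < q.1 ∧ p.2 ≤ q.2 ∨ q.1 < p.1 ∧ q.2 ≤ p.2

lemma Concordant.symm {p q : ℕ × ℕ} (h : Concordant p q) : Concordant q p := Or.symm h

lemma concordant_of_ne_of_eq {p q : ℕ × ℕ} (h₁ : p.1 ≠ q.1) (h₂ : p.2 = q.2) :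
    Concordant p q := by
  unfold Concordant; omega

lemma Concordant.add_mul {p q : ℕ × ℕ} (h : Concordant p q) (c : ℕ) :
    Concordant (p.1 + c * p.2, p.2) (q.1 + c * q.2, q.2) := by
  unfold Concordant at *
  rcases h with ⟨h₁, h₂⟩ | ⟨h₁, h₂⟩
  · exact .inl ⟨by have := Nat.mul_le_mul_left c h₂; omega, h₂⟩
  · exact .inr ⟨by have := Nat.mul_le_mul_left c h₂; omega, h₂⟩

lemma isStronglyAntimagicLabeling_iff (G : SimpleGraph V) (f : Sym2 V → ℕ) :
    IsStronglyAntimagicLabeling G f ↔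
      Set.BijOn f (edges G) (Set.Icc 1 #(edges G)) ∧
        Pairwise fun u v => Concordant (phi G f u, deg G u) (phi G f v, deg G v) := by
  refine and_congr_right fun _ => ⟨fun ⟨hne, hmono⟩ u v huv => ?_, fun h => ⟨?_, ?_⟩⟩
  · have := hne u v huv
    have := hmono u v
    have := hmono v u
    unfold Concordant; omega
  · intro u v huv
    have := h huv
    unfold Concordant at this; omega
  · intro u v hlt
    have := h (show u ≠ v by rintro rfl; omega)
    unfold Concordant at this; omega

lemma phi_eq_of_incident_eq_singleton {G : SimpleGraph V} {f : Sym2 V → ℕ} {v : V}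
    {e₀ : Sym2 V} (h : {e ∈ edges G | v ∈ e} = {e₀}) : phi G f v = f e₀ := by
  rw [phi, h, sum_singleton]

lemma deg_eq_one_of_incident_eq_singleton {G : SimpleGraph V} {v : V} {e₀ : Sym2 V}
    (h : {e ∈ edges G | v ∈ e} = {e₀}) : deg G v = 1 := by
  rw [deg, h, card_singleton]

section Transport

variable {W ι : Type*} [Fintype W] [DecidableEq W] {H : SimpleGraph W} {emb : ι → Sym2 W}
  {S : Finset ι}

lemma deg_eq_card_filter (hS : Set.InjOn emb S) (hE : edges H = S.image emb) (w : W) :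
    deg H w = #{x ∈ S | w ∈ emb x} := by
  rw [deg, hE, filter_image, card_image_of_injOn (hS.mono (filter_subset _ _))]

lemma phi_comp_invFunOn [Nonempty ι] (hS : Set.InjOn emb S) (hE : edges H = S.image emb)
    (L : ι → ℕ) (w : W) :
    phi H (L ∘ Function.invFunOn emb S) w = ∑ x ∈ S with w ∈ emb x, L x := by
  rw [phi, hE, filter_image, sum_image (hS.mono (filter_subset _ _))]
  exact sum_congr rfl fun x hx => congrArg L (hS.leftInvOn_invFunOn (filter_subset _ _ hx))

lemma bijOn_comp_invFunOn [Nonempty ι] (hS : Set.InjOn emb S) (hE : edges H = S.image emb)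
    {L : ι → ℕ} (hL : Set.BijOn L S (Set.Icc 1 #S)) :
    Set.BijOn (L ∘ Function.invFunOn emb S) (edges H) (Set.Icc 1 #(edges H)) := by
  have hbij := hS.bijOn_image
  rw [hE, coe_image, card_image_of_injOn hS]
  exact hL.comp (hbij.symm hbij.invOn_invFunOn.symm)

end Transport

section Path

variable {α : Type*} (a b : α) (k : ℕ)

/-- The `j`-th vertex of the new path from `a` (`j = 0`) to `b` (`j = k`); the values for
`j > k` are junk. -/
def pathVert (j : ℕ) : α ⊕ Fin (k - 1) :=
  if h₀ : j = 0 then Sum.inl a else if h : j < k then Sum.inr ⟨j - 1, by omega⟩ else Sum.inl b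

def pathEdge (i : ℕ) : Sym2 (α ⊕ Fin (k - 1)) :=
  s(pathVert a b k i, pathVert a b k (i + 1))

def pathEmb : Sym2 α ⊕ ℕ → Sym2 (α ⊕ Fin (k - 1)) :=
  Sum.elim (Sym2.map Sum.inl) (pathEdge a b k)

variable {a b k}

@[simp] lemma pathVert_zero : pathVert a b k 0 = Sum.inl a := rfl

@[simp] lemma pathVert_self (hk : k ≠ 0) : pathVert a b k k = Sum.inl b := by
  simp [pathVert, hk]

lemma pathVert_succ (t : Fin (k - 1)) : pathVert a b k (t + 1) = Sum.inr t := by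
  have := t.2
  simp [pathVert, show (t : ℕ) + 1 < k by omega]

lemma pathVert_of_pos_of_lt {j : ℕ} (h₀ : 0 < j) (hj : j < k) :
    pathVert a b k j = Sum.inr ⟨j - 1, by omega⟩ := by
  simp [pathVert, h₀.ne', hj]

lemma pathVert_eq_inl {j : ℕ} {v : α} (h : pathVert a b k j = Sum.inl v) :
    j = 0 ∧ v = a ∨ k ≤ j ∧ v = b := by
  unfold pathVert at h
  split_ifs at h <;> simp_all

lemma pathVert_injOn (hab : a ≠ b) : Set.InjOn (pathVert a b k) (Set.Iic k) := by
  refine Set.LeftInvOn.injOn (f₁' := Sum.elim (fun v => if v = a then 0 else k) (· + 1)) ?_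
  intro j hj
  simp only [Set.mem_Iic] at hj
  unfold pathVert
  split_ifs <;> simp_all [hab.symm] <;> omega

lemma exists_pathVert_or_inl (hk : k ≠ 0) (w : α ⊕ Fin (k - 1)) :
    (∃ j ≤ k, pathVert a b k j = w) ∨ ∃ v, v ≠ a ∧ v ≠ b ∧ Sum.inl v = w := by
  rcases w with v | t
  · by_cases hva : v = a
    · exact .inl ⟨0, by omega, by simp [hva]⟩
    by_cases hvb : v = b
    · exact .inl ⟨k, le_rfl, by simp [hk, hvb]⟩
    exact .inr ⟨v, hva, hvb, rfl⟩
  · exact .inl ⟨t + 1, by omega, pathVert_succ t⟩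

lemma pathVert_mem_pathEdge_iff (hab : a ≠ b) {i j : ℕ} (hi : i < k) (hj : j ≤ k) :
    pathVert a b k j ∈ pathEdge a b k i ↔ j = i ∨ j = i + 1 := by
  have hinj := pathVert_injOn (k := k) hab
  rw [pathEdge, Sym2.mem_iff, hinj.eq_iff hj (Set.mem_Iic.mpr (by omega)),
    hinj.eq_iff hj (Set.mem_Iic.mpr (by omega))]

lemma eq_or_eq_of_inl_mem_pathEdge {v : α} {i : ℕ} (h : Sum.inl v ∈ pathEdge a b k i) :
    v = a ∨ v = b := by
  rw [pathEdge, Sym2.mem_iff] at h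
  rcases h with h | h <;> rcases pathVert_eq_inl h.symm with h' | h' <;> simp [h'.2]

lemma pathEdge_injOn (hab : a ≠ b) : Set.InjOn (pathEdge a b k) (Set.Iio k) := by
  intro i hi j hj h
  simp only [Set.mem_Iio] at hi hj
  have hinj := pathVert_injOn (k := k) hab
  rw [pathEdge, pathEdge, Sym2.eq_iff] at h
  rcases h with ⟨h, -⟩ | ⟨h₁, h₂⟩
  · exact hinj (Set.mem_Iic.mpr (by omega)) (Set.mem_Iic.mpr (by omega)) h
  · have := hinj (Set.mem_Iic.mpr (by omega)) (Set.mem_Iic.mpr (by omega)) h₁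
    have := hinj (Set.mem_Iic.mpr (by omega)) (Set.mem_Iic.mpr (by omega)) h₂
    omega

lemma not_isDiag_pathEdge (hab : a ≠ b) {i : ℕ} (hi : i < k) : ¬ (pathEdge a b k i).IsDiag := by
  rw [pathEdge, Sym2.mk_isDiag_iff]
  intro h
  have := pathVert_injOn (k := k) hab (Set.mem_Iic.mpr (by omega)) (Set.mem_Iic.mpr (by omega)) h
  omega

lemma eq_of_map_inl_eq_pathEdge {e : Sym2 α} {i : ℕ} (hi : i < k)
    (h : Sym2.map Sum.inl e = pathEdge a b k i) : e = s(a, b) := by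
  induction e using Sym2.ind with
  | _ p q =>
    rw [Sym2.map_mk, pathEdge, Sym2.eq_iff] at h
    rcases h with ⟨hp, hq⟩ | ⟨hp, hq⟩ <;>
      rcases pathVert_eq_inl hp.symm with hp' | hp' <;>
      rcases pathVert_eq_inl hq.symm with hq' | hq' <;>
      first | omega | simp [hp'.2, hq'.2, Sym2.eq_swap]

lemma exists_pathEdge_eq_iff (hk : k ≠ 0) {e : Sym2 (α ⊕ Fin (k - 1))} :
    (∃ i < k, pathEdge a b k i = e) ↔
      (∃ i j : Fin (k - 1), (j : ℕ) = i + 1 ∧ e = s(Sum.inr i, Sum.inr j)) ∨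
      (∃ i : Fin (k - 1), (i : ℕ) = 0 ∧ e = s(Sum.inl a, Sum.inr i)) ∨
      (∃ i : Fin (k - 1), (i : ℕ) = k - 2 ∧ e = s(Sum.inl b, Sum.inr i)) ∨
      e ∈ (if k = 1 then {s(Sum.inl a, Sum.inl b)} else ∅ : Set _) := by
  constructor
  · rintro ⟨i, hi, rfl⟩
    by_cases hk₁ : k = 1
    · subst hk₁
      obtain rfl : i = 0 := by omega
      simp [pathEdge]
    by_cases hi₀ : i = 0
    · subst hi₀
      refine .inr (.inl ⟨⟨0, by omega⟩, rfl, ?_⟩)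
      simp [pathEdge, pathVert_of_pos_of_lt (k := k) one_pos (by omega)]
    by_cases hik : i + 1 = k
    · refine .inr (.inr (.inl ⟨⟨k - 2, by omega⟩, rfl, ?_⟩))
      rw [pathEdge, pathVert_of_pos_of_lt (by omega) hi, hik, pathVert_self hk, Sym2.eq_swap]
      congr 3; omega
    · refine .inl ⟨⟨i - 1, by omega⟩, ⟨i, by omega⟩, show i = i - 1 + 1 by omega, ?_⟩
      rw [pathEdge, pathVert_of_pos_of_lt (by omega) hi,
        pathVert_of_pos_of_lt (by omega) (by omega)]
      rfl
  · rintro (⟨i, j, hij, rfl⟩ | ⟨i, hi, rfl⟩ | ⟨i, hi, rfl⟩ | he)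
    · refine ⟨i + 1, by omega, ?_⟩
      rw [pathEdge, pathVert_succ, show (i : ℕ) + 1 + 1 = j + 1 by omega, pathVert_succ]
    · refine ⟨0, by omega, ?_⟩
      rw [pathEdge, pathVert_zero, show 0 + 1 = (i : ℕ) + 1 by omega, pathVert_succ]
    · refine ⟨k - 1, by omega, ?_⟩
      rw [pathEdge, show k - 1 + 1 = k by omega, pathVert_self hk, Sym2.eq_swap,
        pathVert_of_pos_of_lt (by omega) (by omega)]
      congr 3; omega
    · split_ifs at he with hk₁
      · subst hk₁
        exact ⟨0, one_pos, by simpa [pathEdge] using he.symm⟩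
      · exact he.elim

end Path

lemma edges_addPath (G : SimpleGraph V) {a b : V} (hab : a ≠ b) {k : ℕ} (hk : k ≠ 0) :
    edges (addPath G a b k) = ((edges G).disjSum (range k)).image (pathEmb a b k) := by
  ext e
  have hmem : e ∈ ((edges G).disjSum (range k)).image (pathEmb a b k) ↔
      (∃ e' ∈ G.edgeSet, Sym2.map Sum.inl e' = e) ∨ ∃ i < k, pathEdge a b k i = e := by
    simp [pathEmb, edges]
  rw [hmem]
  simp only [edges, mem_filter, mem_univ, true_and, addPath,
    SimpleGraph.edgeSet_fromEdgeSet, Set.mem_sdiff, Set.mem_union, Sym2.mem_diagSet,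
    Set.mem_image, Set.mem_ofPred_eq, or_assoc]
  rw [← exists_pathEdge_eq_iff hk, and_iff_left_iff_imp]
  rintro (⟨e', he', rfl⟩ | ⟨i, hi, rfl⟩)
  · rw [Sym2.isDiag_map Sum.inl_injective]
    exact G.not_isDiag_of_mem_edgeSet he'
  · exact not_isDiag_pathEdge hab hi

lemma pathEmb_injOn {W : Type*} [Fintype W] (G : SimpleGraph W) {a b : W} (hab : a ≠ b)
    (hab' : s(a, b) ∉ G.edgeSet) (k : ℕ) :
    Set.InjOn (pathEmb a b k) ((edges G).disjSum (range k)) := by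
  rintro (e | i) he (e' | j) he' h <;> simp only [mem_coe, inl_mem_disjSum,
    inr_mem_disjSum, mem_range, edges, mem_filter, mem_univ, true_and, pathEmb, Sum.elim_inl,
    Sum.elim_inr] at he he' h
  · exact congrArg _ (Sym2.map.injective Sum.inl_injective h)
  · exact (hab' (eq_of_map_inl_eq_pathEdge he' h ▸ he)).elim
  · exact (hab' (eq_of_map_inl_eq_pathEdge he h.symm ▸ he')).elim
  · exact congrArg _ (pathEdge_injOn hab he he' h)

lemma sum_filter_inl_mem_pathEmb (G : SimpleGraph V) {a b v : V} (hva : v ≠ a) (hvb : v ≠ b)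
    (k : ℕ) (L : Sym2 V ⊕ ℕ → ℕ) :
    ∑ x ∈ (edges G).disjSum (range k) with Sum.inl v ∈ pathEmb a b k x, L x =
      ∑ e ∈ edges G with v ∈ e, L (.inl e) := by
  rw [sum_filter_disjSum, filter_false_of_mem (s := range k), sum_empty, add_zero]
  · simp [pathEmb, Sym2.mem_map]
  · intro i _ h
    rcases eq_or_eq_of_inl_mem_pathEdge h with h | h <;> contradiction

lemma sum_filter_pathVert_mem_pathEmb {G : SimpleGraph V} {a b : V} (hab : a ≠ b) {k : ℕ}
    (hk : k ≠ 0) {ea eb : Sym2 V} (hea : {e ∈ edges G | a ∈ e} = {ea})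
    (heb : {e ∈ edges G | b ∈ e} = {eb}) {j : ℕ} (hj : j ≤ k) (L : Sym2 V ⊕ ℕ → ℕ) :
    ∑ x ∈ (edges G).disjSum (range k) with pathVert a b k j ∈ pathEmb a b k x, L x =
      pathSum k (L (.inl ea)) (L (.inl eb)) (L ∘ .inr) j := by
  have hold : ∑ e ∈ edges G with pathVert a b k j ∈ pathEmb a b k (.inl e), L (.inl e) =
      (if j = 0 then L (.inl ea) else 0) + (if j = k then L (.inl eb) else 0) := by
    by_cases hj₀ : j = 0
    · subst hj₀
      simp [pathEmb, Sym2.mem_map, hea, Ne.symm hk]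
    by_cases hjk : j = k
    · subst hjk
      simp [pathEmb, Sym2.mem_map, heb, hk]
    rw [if_neg hj₀, if_neg hjk, add_zero, filter_false_of_mem, sum_empty]
    intro e _ he
    obtain ⟨v, -, hv⟩ := Sym2.mem_map.mp he
    rcases pathVert_eq_inl hv.symm with h | h <;> omega
  have hpath : ∑ i ∈ range k with pathVert a b k j ∈ pathEmb a b k (.inr i), L (.inr i) =
      ∑ i ∈ range k with (j = i ∨ j = i + 1), L (.inr i) :=
    sum_congr (filter_congr fun i hi => pathVert_mem_pathEdge_iff hab (mem_range.mp hi) hj)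
      fun _ _ => rfl
  rw [sum_filter_disjSum, hold, hpath, sum_range_filter_adjacent hj, pathSum]
  split_ifs <;> simp_all [add_comm]

def addPathLabel {α : Type*} [Fintype α] (G : SimpleGraph α) (f : Sym2 α → ℕ) (a b : α)
    (k : ℕ) (ℓ : ℕ → ℕ) : Sym2 (α ⊕ Fin (k - 1)) → ℕ :=
  Sum.elim (f · + k) ℓ ∘ Function.invFunOn (pathEmb a b k) ((edges G).disjSum (range k))

section AddPathLabel

variable {G : SimpleGraph V} {f : Sym2 V → ℕ} {a b : V} {k : ℕ} (ℓ : ℕ → ℕ)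

lemma addPathLabel_inl (hab : a ≠ b) (hab' : s(a, b) ∉ G.edgeSet) (hk : k ≠ 0) {v : V}
    (hva : v ≠ a) (hvb : v ≠ b) :
    (phi (addPath G a b k) (addPathLabel G f a b k ℓ) (.inl v), deg (addPath G a b k) (.inl v)) =
      (phi G f v + k * deg G v, deg G v) := by
  have hS := pathEmb_injOn G hab hab' k
  have hE := edges_addPath G hab hk
  rw [addPathLabel, phi_comp_invFunOn hS hE, deg_eq_card_filter hS hE, card_eq_sum_ones,
    sum_filter_inl_mem_pathEmb G hva hvb, sum_filter_inl_mem_pathEmb G hva hvb]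
  simp [phi, deg, sum_add_distrib, mul_comm]

lemma addPathLabel_pathVert (hab : a ≠ b) (hab' : s(a, b) ∉ G.edgeSet) (hk : k ≠ 0)
    {ea eb : Sym2 V} (hea : {e ∈ edges G | a ∈ e} = {ea}) (heb : {e ∈ edges G | b ∈ e} = {eb})
    {j : ℕ} (hj : j ≤ k) :
    (phi (addPath G a b k) (addPathLabel G f a b k ℓ) (pathVert a b k j),
        deg (addPath G a b k) (pathVert a b k j)) = (pathSum k (f ea + k) (f eb + k) ℓ j, 2) := by
  have hS := pathEmb_injOn G hab hab' k
  have hE := edges_addPath G hab hk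
  rw [addPathLabel, phi_comp_invFunOn hS hE, deg_eq_card_filter hS hE, card_eq_sum_ones,
    sum_filter_pathVert_mem_pathEmb hab hk hea heb hj,
    sum_filter_pathVert_mem_pathEmb hab hk hea heb hj]
  simp only [Sum.elim_inl, Sum.elim_inr, Prod.mk.injEq, pathSum, Function.comp_apply, true_and]
  split_ifs <;> omega

end AddPathLabel

section StronglyAntimagic

variable {G : SimpleGraph V} {f : Sym2 V → ℕ} {a b : V} {ea eb : Sym2 V}

lemma IsStronglyAntimagicLabeling.apply_ne_apply (hf : IsStronglyAntimagicLabeling G f)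
    (hab : a ≠ b) (hea : {e ∈ edges G | a ∈ e} = {ea}) (heb : {e ∈ edges G | b ∈ e} = {eb}) :
    f ea ≠ f eb := by
  simpa [phi_eq_of_incident_eq_singleton hea, phi_eq_of_incident_eq_singleton heb]
    using hf.2.1 a b hab

lemma IsStronglyAntimagicLabeling.mk_notMem_edgeSet (hf : IsStronglyAntimagicLabeling G f)
    (hab : a ≠ b) (hea : {e ∈ edges G | a ∈ e} = {ea}) (heb : {e ∈ edges G | b ∈ e} = {eb}) :
    s(a, b) ∉ G.edgeSet := by
  intro h
  have ha : s(a, b) ∈ {e ∈ edges G | a ∈ e} := by simp [edges, h]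
  have hb : s(a, b) ∈ {e ∈ edges G | b ∈ e} := by simp [edges, h]
  rw [hea, mem_singleton] at ha
  rw [heb, mem_singleton] at hb
  exact hf.apply_ne_apply hab hea heb (by rw [← ha, ← hb])

lemma IsStronglyAntimagicLabeling.concordant_pathSum (hf : IsStronglyAntimagicLabeling G f)
    (hea : {e ∈ edges G | a ∈ e} = {ea}) (heb : {e ∈ edges G | b ∈ e} = {eb})
    (honly : ∀ w, deg G w = 1 → w = a ∨ w = b) {k : ℕ} (hk : k ≠ 0) {ℓ : ℕ → ℕ}
    (hℓ : Set.BijOn ℓ (Set.Iio k) (Set.Icc 1 k)) {q : V} (hqa : q ≠ a) (hqb : q ≠ b) {j : ℕ}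
    (hj : j ≤ k) :
    Concordant (phi G f q + k * deg G q, deg G q) (pathSum k (f ea + k) (f eb + k) ℓ j, 2) := by
  have hpos := pathSum_pos (x := f ea + k) (y := f eb + k) hk (fun i hi => (hℓ.mapsTo hi).1) hj
  have hle := pathSum_le (x := f ea + k) (y := f eb + k) hk (fun i hi => (hℓ.mapsTo hi).2)
    (by omega) hj
  have hdega := deg_eq_one_of_incident_eq_singleton hea
  have hdegb := deg_eq_one_of_incident_eq_singleton heb
  rcases Nat.lt_or_ge (deg G q) 2 with hq | hq
  · have hq₀ : deg G q = 0 := by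
      by_contra h
      rcases honly q (by omega) with h' | h' <;> contradiction
    have hφ : phi G f q = 0 := by rw [phi, card_eq_zero.mp hq₀, sum_empty]
    exact .inl ⟨by simpa [hφ, hq₀] using hpos, by omega⟩
  · have hqa' := hf.2.2 q a (by omega)
    have hqb' := hf.2.2 q b (by omega)
    rw [phi_eq_of_incident_eq_singleton hea] at hqa'
    rw [phi_eq_of_incident_eq_singleton heb] at hqb'
    have := Nat.mul_le_mul_left k hq
    have := le_max_left (f ea + k) (f eb + k)
    have := le_max_right (f ea + k) (f eb + k)
    exact .inr ⟨by omega, hq⟩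

theorem IsStronglyAntimagicLabeling.addPath (hf : IsStronglyAntimagicLabeling G f) (hab : a ≠ b)
    (hea : {e ∈ edges G | a ∈ e} = {ea}) (heb : {e ∈ edges G | b ∈ e} = {eb})
    (honly : ∀ w, deg G w = 1 → w = a ∨ w = b) {k : ℕ} (hk : k ≠ 0) {ℓ : ℕ → ℕ}
    (hℓ : Set.BijOn ℓ (Set.Iio k) (Set.Icc 1 k))
    (hsum : Set.InjOn (pathSum k (f ea + k) (f eb + k) ℓ) (Set.Iic k)) :
    IsStronglyAntimagicLabeling (addPath G a b k) (addPathLabel G f a b k ℓ) := by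
  have hab' := hf.mk_notMem_edgeSet hab hea heb
  have hold := fun {v : V} (hva : v ≠ a) (hvb : v ≠ b) =>
    addPathLabel_inl (f := f) ℓ hab hab' hk hva hvb
  have hpath := fun {j : ℕ} (hj : j ≤ k) =>
    addPathLabel_pathVert (f := f) ℓ hab hab' hk hea heb hj
  obtain ⟨hbij, hconc⟩ := (isStronglyAntimagicLabeling_iff G f).mp hf
  rw [isStronglyAntimagicLabeling_iff]
  refine ⟨bijOn_comp_invFunOn (pathEmb_injOn G hab hab' k) (edges_addPath G hab hk) ?_, ?_⟩
  · rw [card_disjSum, card_range]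
    exact bijOn_sumElim_disjSum hbij (by rwa [coe_range])
  intro u v huv
  rcases exists_pathVert_or_inl (a := a) (b := b) hk u with ⟨i, hi, rfl⟩ | ⟨p, hpa, hpb, rfl⟩ <;>
    rcases exists_pathVert_or_inl (a := a) (b := b) hk v with ⟨j, hj, rfl⟩ | ⟨q, hqa, hqb, rfl⟩
  · rw [hpath hi, hpath hj]
    exact concordant_of_ne_of_eq (hsum.ne hi hj (ne_of_apply_ne _ huv)) rfl
  · rw [hpath hi, hold hqa hqb]
    exact (hf.concordant_pathSum hea heb honly hk hℓ hqa hqb hi).symm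
  · rw [hold hpa hpb, hpath hj]
    exact hf.concordant_pathSum hea heb honly hk hℓ hpa hpb hj
  · rw [hold hpa hpb, hold hqa hqb]
    exact (hconc (ne_of_apply_ne _ huv)).add_mul k

end StronglyAntimagic

/-- if `G` is strongly antimagic with exactly two leaves `a` and `b`,
then adding a new `a`-`b` path of any length `k ≥ 1` keeps it strongly antimagic. -/
theorem stmt_5 (G : SimpleGraph V) (a b : V) (hab : a ≠ b)
    (ha : deg G a = 1) (hb : deg G b = 1)
    (honly : ∀ w : V, deg G w = 1 → w = a ∨ w = b)
    (hG : IsStronglyAntimagic G)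
    (k : ℕ) (hk : 1 ≤ k) :
    IsStronglyAntimagic (addPath G a b k) := by
  obtain ⟨f, hf⟩ := hG
  obtain ⟨ea, hea⟩ := card_eq_one.mp ha
  obtain ⟨eb, heb⟩ := card_eq_one.mp hb
  have hfea := (hf.1.mapsTo (mem_filter.mp (hea ▸ mem_singleton_self ea)).1).1
  have hfeb := (hf.1.mapsTo (mem_filter.mp (heb ▸ mem_singleton_self eb)).1).1
  obtain ⟨ℓ, hℓ, hsum⟩ := exists_pathLabel (k := k) (x := f ea + k) (y := f eb + k)
    (by simpa using hf.apply_ne_apply hab hea heb) (by omega) (by omega)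
  exact ⟨_, hf.addPath hab hea heb honly (by omega) hℓ hsum⟩
end
end

section
/- For every vertex u of degree 2 on the path P_n with n ≥ 3, there exists a strongly antimagic labeling f of P_n such that φ_f(u) = max{φ_f(w) : deg(w) = 2}. -/
open Finset

open scoped Classical

noncomputable section

variable {V : Type*} [Fintype V] [DecidableEq V]

def seqZ (m i : ℕ) : ℕ := if i % 2 = 0 then m + 1 - i / 2 else (m + 2 - i) / 2

def seqU (m j i : ℕ) : ℕ :=
  if i < j then 2*i - 1
  else if i = j then m - (m + 1) % 2
  else if i = j + 1 ∧ m % 2 = 0 then m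
  else if i ≤ m - j + 2 then m - (i - j)
  else 2*(m + 1 - i)

def Good (m j : ℕ) (a : ℕ → ℕ) : Prop :=
  (∀ i, 1 ≤ i → i ≤ m → 1 ≤ a i ∧ a i ≤ m) ∧
  (∀ i₁ i₂, 1 ≤ i₁ → i₁ ≤ m → 1 ≤ i₂ → i₂ ≤ m → a i₁ = a i₂ → i₁ = i₂) ∧
  (∀ i₁ i₂, 1 ≤ i₁ → i₁ ≤ m - 1 → 1 ≤ i₂ → i₂ ≤ m - 1 →
    a i₁ + a (i₁ + 1) = a i₂ + a (i₂ + 1) → i₁ = i₂) ∧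
  (∀ i, 1 ≤ i → i ≤ m - 1 → a 1 < a i + a (i + 1) ∧ a m < a i + a (i + 1)) ∧
  (a 1 ≠ a m) ∧
  (∀ i, 1 ≤ i → i ≤ m - 1 → a i + a (i + 1) ≤ a j + a (j + 1))

set_option maxHeartbeats 2000000 in
lemma good_Z (m : ℕ) (hm : 2 ≤ m) : Good m 1 (seqZ m) := by
  refine ⟨?_, ?_, ?_, ?_, ?_, ?_⟩
  · intro i h1 h2; unfold seqZ; split_ifs <;> first | contradiction | omega
  · intro i₁ i₂ h1 h2 h3 h4 h; unfold seqZ at h; split_ifs at h <;> first | contradiction | omega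
  · intro i₁ i₂ h1 h2 h3 h4 h; unfold seqZ at h; split_ifs at h <;> first | contradiction | omega
  · intro i h1 h2; unfold seqZ; split_ifs <;> first | contradiction | omega
  · unfold seqZ; split_ifs <;> first | contradiction | omega
  · intro i h1 h2; unfold seqZ; split_ifs <;> first | contradiction | omega

def SU (m j i : ℕ) : ℕ :=
  if i + 1 < j then 4*i
  else if i + 1 = j then 2*j - 3 + (m - (m+1)%2)
  else if i = j then 2*m - 1
  else if i = j + 1 ∧ m % 2 = 0 then 2*m - 2
  else if i + 1 ≤ m - j + 2 then 2*m + 2*j - 2*i - 1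
  else if i = m - j + 2 then 4*j - 6
  else 4*m + 2 - 4*i

set_option maxHeartbeats 8000000 in
lemma sumU_eq (m j : ℕ) (hj : 2 ≤ j) (hm : 2*j ≤ m + 1) (i : ℕ) (h1 : 1 ≤ i) (h2 : i ≤ m - 1) :
    seqU m j i + seqU m j (i + 1) = SU m j i := by
  unfold seqU SU; split_ifs <;> first | contradiction | omega

set_option maxHeartbeats 8000000 in
lemma SU_inj (m j : ℕ) (hj : 2 ≤ j) (hm : 2*j ≤ m + 1) :
    ∀ i₁ i₂, 1 ≤ i₁ → i₁ ≤ m - 1 → 1 ≤ i₂ → i₂ ≤ m - 1 → SU m j i₁ = SU m j i₂ → i₁ = i₂ := by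
  intro i₁ i₂ h1 h2 h3 h4 h; unfold SU at h; split_ifs at h <;> first | contradiction | omega

set_option maxHeartbeats 8000000 in
lemma SU_ge (m j : ℕ) (hj : 2 ≤ j) (hm : 2*j ≤ m + 1) :
    ∀ i, 1 ≤ i → i ≤ m - 1 → 3 ≤ SU m j i := by
  intro i h1 h2; unfold SU; split_ifs <;> first | contradiction | omega

set_option maxHeartbeats 8000000 in
lemma SU_le (m j : ℕ) (hj : 2 ≤ j) (hm : 2*j ≤ m + 1) :
    ∀ i, 1 ≤ i → i ≤ m - 1 → SU m j i ≤ 2*m - 1 := by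
  intro i h1 h2; unfold SU; split_ifs <;> first | contradiction | omega

lemma SU_peak (m j : ℕ) (hj : 2 ≤ j) (hm : 2*j ≤ m + 1) : SU m j j = 2*m - 1 := by
  unfold SU; split_ifs <;> first | contradiction | omega

lemma seqU_one (m j : ℕ) (hj : 2 ≤ j) (hm : 2*j ≤ m + 1) : seqU m j 1 = 1 := by
  unfold seqU; split_ifs <;> first | contradiction | omega

lemma seqU_last (m j : ℕ) (hj : 2 ≤ j) (hm : 2*j ≤ m + 1) : seqU m j m = 2 := by
  unfold seqU; split_ifs <;> first | contradiction | omega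

set_option maxHeartbeats 4000000 in
lemma seqU_H1 (m j : ℕ) (hj : 2 ≤ j) (hm : 2*j ≤ m + 1) :
    ∀ i, 1 ≤ i → i ≤ m → 1 ≤ seqU m j i ∧ seqU m j i ≤ m := by
  intro i h1 h2; unfold seqU; split_ifs <;> first | contradiction | omega

set_option maxHeartbeats 4000000 in
lemma seqU_H2 (m j : ℕ) (hj : 2 ≤ j) (hm : 2*j ≤ m + 1) :
    ∀ i₁ i₂, 1 ≤ i₁ → i₁ ≤ m → 1 ≤ i₂ → i₂ ≤ m → seqU m j i₁ = seqU m j i₂ → i₁ = i₂ := by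
  intro i₁ i₂ h1 h2 h3 h4 h; unfold seqU at h; split_ifs at h <;> first | contradiction | omega

lemma good_U (m j : ℕ) (hj : 2 ≤ j) (hm : 2*j ≤ m + 1) : Good m j (seqU m j) := by
  have hm3 : 3 ≤ m := by omega
  have hjm : j ≤ m - 1 := by omega
  refine ⟨seqU_H1 m j hj hm, seqU_H2 m j hj hm, ?_, ?_, ?_, ?_⟩
  · intro i₁ i₂ h1 h2 h3 h4 h
    rw [sumU_eq m j hj hm i₁ h1 h2, sumU_eq m j hj hm i₂ h3 h4] at h
    exact SU_inj m j hj hm i₁ i₂ h1 h2 h3 h4 h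
  · intro i h1 h2
    rw [sumU_eq m j hj hm i h1 h2, seqU_one m j hj hm, seqU_last m j hj hm]
    have := SU_ge m j hj hm i h1 h2
    omega
  · rw [seqU_one m j hj hm, seqU_last m j hj hm]; omega
  · intro i h1 h2
    rw [sumU_eq m j hj hm i h1 h2, sumU_eq m j hj hm j (by omega) hjm, SU_peak m j hj hm]
    exact SU_le m j hj hm i h1 h2

lemma good_mirror (m j : ℕ) (a : ℕ → ℕ) (hm : 2 ≤ m) (h1 : 1 ≤ j) (h2 : j ≤ m - 1)
    (hg : Good m j a) : Good m (m - j) (fun i => a (m + 1 - i)) := by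
  obtain ⟨G1, G2, G3, G4, G5, G6⟩ := hg
  have key : ∀ i, 1 ≤ i → i ≤ m - 1 → a (m + 1 - i) + a (m + 1 - (i + 1)) = a (m - i) + a (m - i + 1) := by
    intro i hi1 hi2
    have e1 : m + 1 - (i + 1) = m - i := by omega
    have e2 : m + 1 - i = m - i + 1 := by omega
    rw [e1, e2, Nat.add_comm]
  refine ⟨?_, ?_, ?_, ?_, ?_, ?_⟩
  · intro i hi1 hi2; exact G1 _ (by omega) (by omega)
  · intro i₁ i₂ hi1 hi2 hi3 hi4 h
    have := G2 _ _ (by omega : 1 ≤ m + 1 - i₁) (by omega) (by omega : 1 ≤ m + 1 - i₂) (by omega) h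
    omega
  · intro i₁ i₂ hi1 hi2 hi3 hi4 h
    rw [key i₁ hi1 hi2, key i₂ hi3 hi4] at h
    have := G3 _ _ (by omega : 1 ≤ m - i₁) (by omega) (by omega : 1 ≤ m - i₂) (by omega) h
    omega
  · intro i hi1 hi2
    have e1 : m + 1 - 1 = m := by omega
    have e2 : m + 1 - m = 1 := by omega
    rw [key i hi1 hi2]
    simp only [e1, e2]
    have := G4 (m - i) (by omega) (by omega)
    exact ⟨this.2, this.1⟩
  · have e1 : m + 1 - 1 = m := by omega
    have e2 : m + 1 - m = 1 := by omega
    simp only [e1, e2]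
    exact G5.symm
  · intro i hi1 hi2
    rw [key i hi1 hi2, key (m - j) (by omega) (by omega)]
    have e3 : m - (m - j) = j := by omega
    rw [e3]
    exact G6 (m - i) (by omega) (by omega)

lemma exists_good (m j : ℕ) (hm : 2 ≤ m) (h1 : 1 ≤ j) (h2 : j ≤ m - 1) : ∃ a, Good m j a := by
  by_cases hj1 : j = 1
  · subst hj1; exact ⟨seqZ m, good_Z m hm⟩
  by_cases hj2 : 2*j ≤ m + 1
  · exact ⟨seqU m j, good_U m j (by omega) hj2⟩
  by_cases hj3 : m - j = 1
  · have hg := good_mirror m 1 (seqZ m) hm (by omega) (by omega) (good_Z m hm)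
    have ej : m - 1 = j := by omega
    rw [ej] at hg
    exact ⟨_, hg⟩
  · have hg := good_mirror m (m - j) (seqU m (m - j)) hm (by omega) (by omega)
      (good_U m (m - j) (by omega) (by omega))
    have ej : m - (m - j) = j := by omega
    rw [ej] at hg
    exact ⟨_, hg⟩

section Path
variable (n : ℕ)

def pe (i : ℕ) (h : i + 1 < n) : Sym2 (Fin n) := s(⟨i, by omega⟩, ⟨i+1, h⟩)

lemma mem_edges_iff (e : Sym2 (Fin n)) :
    e ∈ edges (SimpleGraph.pathGraph n) ↔ ∃ i : ℕ, ∃ h : i + 1 < n, e = pe n i h := by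
  refine Sym2.ind (fun x y => ?_) e
  simp only [edges, Finset.mem_filter, Finset.mem_univ, true_and,
    SimpleGraph.mem_edgeSet, SimpleGraph.pathGraph_adj]
  constructor
  · rintro (h | h)
    · exact ⟨x.val, by omega, by simp [pe, Sym2.eq_iff]; left; exact Fin.ext (by simp [← h])⟩
    · exact ⟨y.val, by omega, by simp [pe, Sym2.eq_iff]; right; exact Fin.ext (by simp [← h])⟩
  · rintro ⟨i, h, he⟩
    simp [pe, Sym2.eq_iff] at he
    rcases he with ⟨h1, h2⟩ | ⟨h1, h2⟩ <;> subst h1 <;> subst h2 <;> simp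

lemma pe_inj {i i' : ℕ} (h : i + 1 < n) (h' : i' + 1 < n) (he : pe n i h = pe n i' h') :
    i = i' := by
  simp [pe, Sym2.eq_iff, Fin.ext_iff] at he
  omega

lemma mem_pe (v : Fin n) (i : ℕ) (h : i + 1 < n) :
    v ∈ pe n i h ↔ v.val = i ∨ v.val = i + 1 := by
  simp [pe, Sym2.mem_iff, Fin.ext_iff]

lemma card_edges : (edges (SimpleGraph.pathGraph n)).card = n - 1 := by
  rw [← Finset.card_range (n-1)]
  refine (Finset.card_bij (fun i hi => pe n i (by rw [Finset.mem_range] at hi; omega)) ?_ ?_ ?_).symm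
  · intro i hi; rw [mem_edges_iff]; exact ⟨i, _, rfl⟩
  · intro i hi i' hi' h; exact pe_inj n _ _ h
  · intro e he; rw [mem_edges_iff] at he
    obtain ⟨i, h, rfl⟩ := he
    exact ⟨i, by rw [Finset.mem_range]; omega, rfl⟩

lemma filter_left (hn : 2 ≤ n) (v : Fin n) (hv : v.val = 0) :
    (edges (SimpleGraph.pathGraph n)).filter (fun e => v ∈ e) = {pe n 0 (by omega)} := by
  ext e
  simp only [Finset.mem_filter, Finset.mem_singleton, mem_edges_iff]
  constructor
  · rintro ⟨⟨i, h, rfl⟩, hm⟩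
    rw [mem_pe] at hm
    have : i = 0 := by omega
    subst this; rfl
  · rintro rfl
    exact ⟨⟨0, by omega, rfl⟩, by rw [mem_pe]; omega⟩

lemma filter_right (hn : 2 ≤ n) (v : Fin n) (hv : v.val = n - 1) :
    (edges (SimpleGraph.pathGraph n)).filter (fun e => v ∈ e) = {pe n (n-2) (by omega)} := by
  ext e
  simp only [Finset.mem_filter, Finset.mem_singleton, mem_edges_iff]
  constructor
  · rintro ⟨⟨i, h, rfl⟩, hm⟩
    rw [mem_pe] at hm
    have : i = n - 2 := by omega
    subst this; rfl
  · rintro rfl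
    exact ⟨⟨n-2, by omega, rfl⟩, by rw [mem_pe]; omega⟩

lemma filter_mid (v : Fin n) (hv0 : 0 < v.val) (hv1 : v.val < n - 1) :
    (edges (SimpleGraph.pathGraph n)).filter (fun e => v ∈ e) =
      {pe n (v.val - 1) (by omega), pe n v.val (by omega)} := by
  ext e
  simp only [Finset.mem_filter, Finset.mem_insert, Finset.mem_singleton, mem_edges_iff]
  constructor
  · rintro ⟨⟨i, h, rfl⟩, hm⟩
    rw [mem_pe] at hm
    rcases hm with hm | hm
    · right; subst hm; rfl
    · left; have : i = v.val - 1 := by omega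
      subst this; rfl
  · rintro (rfl | rfl)
    · exact ⟨⟨v.val - 1, by omega, rfl⟩, by rw [mem_pe]; omega⟩
    · exact ⟨⟨v.val, by omega, rfl⟩, by rw [mem_pe]; omega⟩

def lowf : Sym2 (Fin n) → ℕ := Sym2.lift ⟨fun x y => min x.val y.val, fun x y => by simp [min_comm]⟩

def lab (a : ℕ → ℕ) : Sym2 (Fin n) → ℕ :=
  fun e => if e ∈ edges (SimpleGraph.pathGraph n) then a (lowf n e + 1) else 0

lemma lab_pe (a : ℕ → ℕ) (i : ℕ) (h : i + 1 < n) : lab n a (pe n i h) = a (i + 1) := by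
  rw [lab, if_pos ((mem_edges_iff n _).2 ⟨i, h, rfl⟩)]
  congr 1
  simp [lowf, pe, Sym2.lift]


lemma phi_left (hn : 2 ≤ n) (a : ℕ → ℕ) (v : Fin n) (hv : v.val = 0) :
    phi (SimpleGraph.pathGraph n) (lab n a) v = a 1 := by
  rw [phi, filter_left n hn v hv, Finset.sum_singleton, lab_pe]

lemma phi_right (hn : 2 ≤ n) (a : ℕ → ℕ) (v : Fin n) (hv : v.val = n - 1) :
    phi (SimpleGraph.pathGraph n) (lab n a) v = a (n - 1) := by
  rw [phi, filter_right n hn v hv, Finset.sum_singleton, lab_pe]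
  congr 1
  omega

lemma phi_mid (a : ℕ → ℕ) (v : Fin n) (hv0 : 0 < v.val) (hv1 : v.val < n - 1) :
    phi (SimpleGraph.pathGraph n) (lab n a) v = a v.val + a (v.val + 1) := by
  rw [phi, filter_mid n v hv0 hv1, Finset.sum_pair, lab_pe, lab_pe]
  · congr 2
    omega
  · intro h
    have := pe_inj n _ _ h
    omega

lemma deg_left (hn : 2 ≤ n) (v : Fin n) (hv : v.val = 0) :
    deg (SimpleGraph.pathGraph n) v = 1 := by
  rw [deg, filter_left n hn v hv, Finset.card_singleton]

lemma deg_right (hn : 2 ≤ n) (v : Fin n) (hv : v.val = n - 1) :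
    deg (SimpleGraph.pathGraph n) v = 1 := by
  rw [deg, filter_right n hn v hv, Finset.card_singleton]

lemma deg_mid (v : Fin n) (hv0 : 0 < v.val) (hv1 : v.val < n - 1) :
    deg (SimpleGraph.pathGraph n) v = 2 := by
  rw [deg, filter_mid n v hv0 hv1, Finset.card_pair]
  intro h
  have := pe_inj n _ _ h
  omega

lemma deg_two_iff (hn : 2 ≤ n) (v : Fin n) :
    deg (SimpleGraph.pathGraph n) v = 2 ↔ 0 < v.val ∧ v.val < n - 1 := by
  constructor
  · intro h
    by_contra hc
    have hv := v.isLt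
    rcases (by omega : v.val = 0 ∨ v.val = n - 1) with h0 | h0
    · rw [deg_left n hn v h0] at h; omega
    · rw [deg_right n hn v h0] at h; omega
  · rintro ⟨h0, h1⟩
    exact deg_mid n v h0 h1

lemma main_abstract (hn : 3 ≤ n) (a : ℕ → ℕ) (j : ℕ) (hj1 : 1 ≤ j) (hj2 : j ≤ n - 2)
    (H1 : ∀ i, 1 ≤ i → i ≤ n - 1 → 1 ≤ a i ∧ a i ≤ n - 1)
    (H2 : ∀ i₁ i₂, 1 ≤ i₁ → i₁ ≤ n - 1 → 1 ≤ i₂ → i₂ ≤ n - 1 → a i₁ = a i₂ → i₁ = i₂)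
    (H3 : ∀ i₁ i₂, 1 ≤ i₁ → i₁ ≤ n - 2 → 1 ≤ i₂ → i₂ ≤ n - 2 →
      a i₁ + a (i₁ + 1) = a i₂ + a (i₂ + 1) → i₁ = i₂)
    (H4 : ∀ i, 1 ≤ i → i ≤ n - 2 → a 1 < a i + a (i + 1) ∧ a (n - 1) < a i + a (i + 1))
    (H5 : a 1 ≠ a (n - 1))
    (H6 : ∀ i, 1 ≤ i → i ≤ n - 2 → a i + a (i + 1) ≤ a j + a (j + 1))
    (u : Fin n) (hu : u.val = j) :
    IsStronglyAntimagicLabeling (SimpleGraph.pathGraph n) (lab n a) ∧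
      ∀ w : Fin n, deg (SimpleGraph.pathGraph n) w = 2 →
        phi (SimpleGraph.pathGraph n) (lab n a) w ≤ phi (SimpleGraph.pathGraph n) (lab n a) u := by
  have hn2 : 2 ≤ n := by omega
  -- phi of any vertex
  have phiv : ∀ v : Fin n, v.val = 0 ∨ v.val = n - 1 ∨ (0 < v.val ∧ v.val < n - 1) := by
    intro v; have := v.isLt; omega
  have phiu : phi (SimpleGraph.pathGraph n) (lab n a) u = a j + a (j + 1) := by
    rw [phi_mid n a u (by omega) (by omega), hu]
  constructor
  · refine ⟨?_, ?_, ?_⟩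
    · -- BijOn
      rw [card_edges]
      have hmaps : ∀ e ∈ edges (SimpleGraph.pathGraph n), lab n a e ∈ Finset.Icc 1 (n - 1) := by
        intro e he
        rw [mem_edges_iff] at he
        obtain ⟨i, h, rfl⟩ := he
        rw [lab_pe]
        have := H1 (i + 1) (by omega) (by omega)
        rw [Finset.mem_Icc]
        omega
      have hinj : Set.InjOn (lab n a) (edges (SimpleGraph.pathGraph n) : Set (Sym2 (Fin n))) := by
        intro e he e' he' hee
        rw [Finset.mem_coe, mem_edges_iff] at he he'
        obtain ⟨i, h, rfl⟩ := he
        obtain ⟨i', h', rfl⟩ := he'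
        rw [lab_pe, lab_pe] at hee
        have : i + 1 = i' + 1 := H2 _ _ (by omega) (by omega) (by omega) (by omega) hee
        have : i = i' := by omega
        subst this; rfl
      refine ⟨?_, hinj, ?_⟩
      · intro e he
        rw [Finset.mem_coe] at he
        have := hmaps e he
        rw [Finset.mem_Icc] at this
        exact this
      · -- SurjOn
        have himg : (edges (SimpleGraph.pathGraph n)).image (lab n a) = Finset.Icc 1 (n - 1) := by
          apply Finset.eq_of_subset_of_card_le
          · intro y hy
            rw [Finset.mem_image] at hy
            obtain ⟨e, he, rfl⟩ := hy
            exact hmaps e he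
          · rw [Finset.card_image_of_injOn hinj, card_edges]
            simp
        intro y hy
        have : y ∈ Finset.Icc 1 (n - 1) := by rw [Finset.mem_Icc]; exact hy
        rw [← himg, Finset.mem_image] at this
        obtain ⟨e, he, rfl⟩ := this
        exact Set.mem_image_of_mem _ he
    · -- distinct phi
      intro v w hvw
      have hv := v.isLt
      have hw := w.isLt
      have hne : v.val ≠ w.val := fun h => hvw (Fin.ext h)
      rcases phiv v with h1 | h1 | ⟨h1, h1'⟩ <;> rcases phiv w with h2 | h2 | ⟨h2, h2'⟩
      · omega
      · rw [phi_left n hn2 a v h1, phi_right n hn2 a w h2]; exact H5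
      · rw [phi_left n hn2 a v h1, phi_mid n a w h2 h2']
        exact Nat.ne_of_lt (H4 w.val (by omega) (by omega)).1
      · rw [phi_right n hn2 a v h1, phi_left n hn2 a w h2]; exact (Ne.symm H5)
      · omega
      · rw [phi_right n hn2 a v h1, phi_mid n a w h2 h2']
        exact Nat.ne_of_lt (H4 w.val (by omega) (by omega)).2
      · rw [phi_mid n a v h1 h1', phi_left n hn2 a w h2]
        exact (Nat.ne_of_lt (H4 v.val (by omega) (by omega)).1).symm
      · rw [phi_mid n a v h1 h1', phi_right n hn2 a w h2]
        exact (Nat.ne_of_lt (H4 v.val (by omega) (by omega)).2).symm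
      · rw [phi_mid n a v h1 h1', phi_mid n a w h2 h2']
        intro h
        exact hne (H3 _ _ (by omega) (by omega) (by omega) (by omega) h)
    · -- degree monotone
      intro v w hdeg
      have hv := v.isLt
      have hw := w.isLt
      rcases phiv v with h1 | h1 | ⟨h1, h1'⟩ <;> rcases phiv w with h2 | h2 | ⟨h2, h2'⟩
      · rw [deg_left n hn2 v h1, deg_left n hn2 w h2] at hdeg; omega
      · rw [deg_left n hn2 v h1, deg_right n hn2 w h2] at hdeg; omega
      · rw [deg_left n hn2 v h1, deg_mid n w h2 h2'] at hdeg; omega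
      · rw [deg_right n hn2 v h1, deg_left n hn2 w h2] at hdeg; omega
      · rw [deg_right n hn2 v h1, deg_right n hn2 w h2] at hdeg; omega
      · rw [deg_right n hn2 v h1, deg_mid n w h2 h2'] at hdeg; omega
      · rw [phi_mid n a v h1 h1', phi_left n hn2 a w h2]
        exact (H4 v.val (by omega) (by omega)).1
      · rw [phi_mid n a v h1 h1', phi_right n hn2 a w h2]
        exact (H4 v.val (by omega) (by omega)).2
      · rw [deg_mid n v h1 h1', deg_mid n w h2 h2'] at hdeg; omega
  · intro w hw
    rw [deg_two_iff n hn2 w] at hw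
    rw [phi_mid n a w hw.1 hw.2, phiu]
    exact H6 w.val (by omega) (by omega)

end Path

/-- for every degree-2 vertex `u` of the path `P n` (`n ≥ 3`) there is
a strongly antimagic labeling whose φ-value at `u` is maximal among degree-2 vertices. -/
theorem stmt_6 (n : ℕ) (hn : 3 ≤ n) (u : Fin n)
    (hu : deg (SimpleGraph.pathGraph n) u = 2) :
    ∃ f : Sym2 (Fin n) → ℕ,
      IsStronglyAntimagicLabeling (SimpleGraph.pathGraph n) f ∧
      ∀ w : Fin n, deg (SimpleGraph.pathGraph n) w = 2 →
        phi (SimpleGraph.pathGraph n) f w ≤ phi (SimpleGraph.pathGraph n) f u := by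
  have hdeg := (deg_two_iff n (by omega) u).1 hu
  obtain ⟨a, G1, G2, G3, G4, G5, G6⟩ := exists_good (n - 1) u.val (by omega) (by omega) (by omega)
  obtain ⟨hlab, hmax⟩ := main_abstract n hn a u.val (by omega) (by omega)
    (fun i h1 h2 => G1 i h1 h2)
    (fun i₁ i₂ h1 h2 h3 h4 h => G2 i₁ i₂ h1 h2 h3 h4 h)
    (fun i₁ i₂ h1 h2 h3 h4 h => G3 i₁ i₂ h1 (by omega) h3 (by omega) h)
    (fun i h1 h2 => G4 i h1 (by omega))
    G5
    (fun i h1 h2 => G6 i h1 (by omega))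
    u rfl
  exact ⟨lab n a, hlab, hmax⟩

end
end

section
/- Every spider (a tree with exactly one vertex of degree greater than 2) is strongly antimagic. -/
open Finset

open scoped Classical

noncomputable section

variable {V : Type*} [Fintype V] [DecidableEq V]

section Basics

variable {V : Type*} [Fintype V] [DecidableEq V]

namespace Spider

variable (G : SimpleGraph V)

lemma edges_eq : edges G = G.edgeFinset := by
  ext e; simp [edges, SimpleGraph.mem_edgeFinset]

lemma deg_eq (v : V) : deg G v = G.degree v := by
  rw [deg, ← SimpleGraph.card_incidenceFinset_eq_degree]
  congr 1
  rw [SimpleGraph.incidenceFinset_eq_filter, edges_eq]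

lemma phi_eq (f : Sym2 V → ℕ) (v : V) :
    phi G f v = ∑ w ∈ G.neighborFinset v, f s(v, w) := by
  rw [phi]
  refine (Finset.sum_bij (fun w _ => s(v, w)) ?_ ?_ ?_ ?_).symm
  · intro w hw
    rw [SimpleGraph.mem_neighborFinset] at hw
    simp only [Finset.mem_filter, edges, Finset.mem_univ, true_and]
    exact ⟨hw, Sym2.mem_mk_left _ _⟩
  · intro w hw w' hw' h
    exact Sym2.congr_right.mp h
  · intro e he
    simp only [Finset.mem_filter, edges, Finset.mem_univ, true_and] at he
    obtain ⟨he1, he2⟩ := he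
    refine ⟨Sym2.Mem.other he2, ?_, ?_⟩
    · rw [SimpleGraph.mem_neighborFinset, ← SimpleGraph.mem_edgeSet]
      rwa [Sym2.other_spec he2]
    · exact Sym2.other_spec he2
  · intro w hw; rfl

section Tree

variable {G}

lemma dist_add_dist_le {u v x : V} (p : G.Walk u v) (hx : x ∈ p.support) :
    G.dist u x + G.dist x v ≤ p.length := by
  have h1 := SimpleGraph.dist_le (p.takeUntil x hx)
  have h2 := SimpleGraph.dist_le (p.dropUntil x hx)
  have h3 : (p.takeUntil x hx).length + (p.dropUntil x hx).length = p.length := by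
    conv_rhs => rw [← p.take_spec hx]
    rw [SimpleGraph.Walk.length_append]
  omega

lemma adj_dist_cases (hT : G.IsTree) (u : V) {v w : V} (h : G.Adj v w) :
    G.dist u w = G.dist u v + 1 ∨ G.dist u v = G.dist u w + 1 := by
  have hc := hT.isConnected
  have hvw1 : G.dist v w = 1 := SimpleGraph.dist_eq_one_iff_adj.mpr h
  have hwv1 : G.dist w v = 1 := SimpleGraph.dist_eq_one_iff_adj.mpr h.symm
  have t1 : G.dist u w ≤ G.dist u v + 1 := by
    have := hc.dist_triangle (u := u) (v := v) (w := w)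
    omega
  have t2 : G.dist u v ≤ G.dist u w + 1 := by
    have := hc.dist_triangle (u := u) (v := w) (w := v)
    omega
  have hne : G.dist u w ≠ G.dist u v := by
    intro heq
    obtain ⟨p, hp, hlen⟩ := hc.exists_path_of_dist u v
    obtain ⟨q, hq, hqlen⟩ := hc.exists_path_of_dist u w
    have hwns : w ∉ p.support := by
      intro hws
      have := dist_add_dist_le p hws
      omega
    have hp2 : (p.concat h).IsPath := by
      rw [← SimpleGraph.Walk.isPath_reverse_iff, SimpleGraph.Walk.reverse_concat,
        SimpleGraph.Walk.cons_isPath_iff]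
      refine ⟨hp.reverse, ?_⟩
      rw [SimpleGraph.Walk.support_reverse, List.mem_reverse]
      exact hwns
    have hequ := (hT.existsUnique_path u w).unique hp2 hq
    have := congrArg SimpleGraph.Walk.length hequ
    rw [SimpleGraph.Walk.length_concat] at this
    omega
  omega

lemma parent_spec (hT : G.IsTree) (u : V) {v : V} (hv : v ≠ u) :
    ∃! w, G.Adj v w ∧ G.dist u w + 1 = G.dist u v := by
  have hc := hT.isConnected
  have hd : 0 < G.dist u v := hc.pos_dist_of_ne (Ne.symm hv)
  obtain ⟨p, hp, hlen⟩ := hc.exists_path_of_dist u v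
  obtain ⟨w, hadj, q, hq⟩ := SimpleGraph.Walk.exists_eq_cons_of_ne hv p.reverse
  have hqlen : q.length + 1 = G.dist u v := by
    have := congrArg SimpleGraph.Walk.length hq
    rw [SimpleGraph.Walk.length_reverse] at this
    simp only [SimpleGraph.Walk.length_cons] at this
    omega
  have hdw : G.dist u w + 1 = G.dist u v := by
    have h1 : G.dist w u ≤ q.length := SimpleGraph.dist_le q
    have h2 : G.dist u w = G.dist w u := SimpleGraph.dist_comm
    rcases adj_dist_cases hT u hadj with h' | h' <;> omega
  refine ⟨w, ⟨hadj, hdw⟩, ?_⟩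
  rintro w' ⟨hadj', hdw'⟩
  obtain ⟨pw, hpw, hpwlen⟩ := hc.exists_path_of_dist w u
  obtain ⟨pw', hpw', hpwlen'⟩ := hc.exists_path_of_dist w' u
  have hdwu : G.dist w u + 1 = G.dist v u := by
    rw [SimpleGraph.dist_comm (u := w), SimpleGraph.dist_comm (u := v)]; omega
  have hdwu' : G.dist w' u + 1 = G.dist v u := by
    rw [SimpleGraph.dist_comm (u := w'), SimpleGraph.dist_comm (u := v)]; omega
  have hvns : v ∉ pw.support := by
    intro hvs
    have := dist_add_dist_le pw hvs
    have : G.dist w v = 1 := SimpleGraph.dist_eq_one_iff_adj.mpr hadj.symm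
    omega
  have hvns' : v ∉ pw'.support := by
    intro hvs
    have := dist_add_dist_le pw' hvs
    have : G.dist w' v = 1 := SimpleGraph.dist_eq_one_iff_adj.mpr hadj'.symm
    omega
  have h1 : (SimpleGraph.Walk.cons hadj pw).IsPath := by
    rw [SimpleGraph.Walk.cons_isPath_iff]; exact ⟨hpw, hvns⟩
  have h2 : (SimpleGraph.Walk.cons hadj' pw').IsPath := by
    rw [SimpleGraph.Walk.cons_isPath_iff]; exact ⟨hpw', hvns'⟩
  have hequ := (hT.existsUnique_path v u).unique h2 h1
  have := congrArg (fun z => SimpleGraph.Walk.getVert z 1) hequ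
  simpa using this

end Tree

end Spider


end Basics


section StructureDefs

variable {V : Type*} [Fintype V] [DecidableEq V]
variable {G : SimpleGraph V} (hT : G.IsTree) (u : V)

namespace Spider

/-- parent map: junk value `u` at `u`. -/
def par (v : V) : V := if hv : v = u then u else (parent_spec hT u hv).choose

lemma par_adj {v : V} (hv : v ≠ u) :
    G.Adj v (par hT u v) ∧ G.dist u (par hT u v) + 1 = G.dist u v := by
  rw [par, dif_neg hv]
  exact (parent_spec hT u hv).choose_spec.1

lemma par_eq {v w : V} (hv : v ≠ u) (h1 : G.Adj v w) (h2 : G.dist u w + 1 = G.dist u v) :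
    w = par hT u v := by
  rw [par, dif_neg hv]
  exact (parent_spec hT u hv).choose_spec.2 w ⟨h1, h2⟩

lemma ne_u_of_dist_pos (G : SimpleGraph V) {u v : V} (h : 0 < G.dist u v) : v ≠ u := by
  intro h'; subst h'; simp [SimpleGraph.dist_self] at h

/-- iterated parent -/
def anc (n : ℕ) (v : V) : V := (par hT u)^[n] v

lemma anc_prop : ∀ n : ℕ, ∀ v : V, v ≠ u → n < G.dist u v →
    G.dist u (anc hT u n v) + n = G.dist u v ∧ anc hT u n v ≠ u := by
  intro n
  induction n with
  | zero => intro v hv _; exact ⟨by simp [anc], hv⟩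
  | succ n ih =>
    intro v hv hn
    obtain ⟨ih1, ih2⟩ := ih v hv (by omega)
    have h2 : anc hT u (n + 1) v = par hT u (anc hT u n v) := Function.iterate_succ_apply' _ _ _
    have h3 := (par_adj hT u ih2).2
    refine ⟨by rw [h2]; omega, ?_⟩
    rw [h2]
    exact ne_u_of_dist_pos G (by omega)

/-- the leg (neighbor of u) through which v hangs -/
def legOf (v : V) : V := anc hT u (G.dist u v - 1) v

lemma legOf_depth {v : V} (hv : v ≠ u) : G.dist u (legOf hT u v) = 1 := by
  have hd : 0 < G.dist u v := hT.isConnected.pos_dist_of_ne (Ne.symm hv)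
  obtain ⟨h1, -⟩ := anc_prop hT u (G.dist u v - 1) v hv (by omega)
  rw [legOf]; omega

lemma legOf_ne {v : V} (hv : v ≠ u) : legOf hT u v ≠ u := by
  have h := legOf_depth hT u hv
  exact ne_u_of_dist_pos G (by omega)

lemma legOf_adj {v : V} (hv : v ≠ u) : G.Adj u (legOf hT u v) :=
  SimpleGraph.dist_eq_one_iff_adj.mp (legOf_depth hT u hv)

lemma legOf_depth_one {v : V} (h : G.dist u v = 1) : legOf hT u v = v := by
  rw [legOf, h]; simp [anc]

lemma legOf_par {v : V} (h2 : 2 ≤ G.dist u v) : legOf hT u (par hT u v) = legOf hT u v := by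
  have hv : v ≠ u := ne_u_of_dist_pos G (by omega)
  have hp := (par_adj hT u hv).2
  rw [legOf, legOf]
  have e1 : G.dist u (par hT u v) - 1 = G.dist u v - 2 := by omega
  have e2 : G.dist u v - 1 = (G.dist u v - 2) + 1 := by omega
  rw [e1, e2, anc, anc, Function.iterate_succ_apply]

lemma legOf_anc : ∀ s : ℕ, ∀ v : V, v ≠ u → s < G.dist u v →
    legOf hT u (anc hT u s v) = legOf hT u v := by
  intro s
  induction s with
  | zero => intro v hv _; simp [anc]
  | succ s ih =>
    intro v hv hs
    have hv2 : 2 ≤ G.dist u v := by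
      have : 0 < G.dist u v := hT.isConnected.pos_dist_of_ne (Ne.symm hv)
      omega
    have hp := (par_adj hT u hv).2
    have hpu : par hT u v ≠ u := ne_u_of_dist_pos G (by omega)
    have h2 : anc hT u (s + 1) v = anc hT u s (par hT u v) := by
      rw [anc, anc, Function.iterate_succ_apply]
    rw [h2, ih (par hT u v) hpu (by omega), legOf_par hT u hv2]

/-- children of a vertex -/
def chl (G : SimpleGraph V) (u v : V) : Finset V :=
  (G.neighborFinset v).filter (fun w => G.dist u w = G.dist u v + 1)

lemma par_mem_nbr {v : V} (hv : v ≠ u) : par hT u v ∈ G.neighborFinset v := by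
  rw [SimpleGraph.mem_neighborFinset]; exact (par_adj hT u hv).1

lemma nbr_split {v : V} (hv : v ≠ u) :
    G.neighborFinset v = insert (par hT u v) (chl G u v) := by
  ext w
  simp only [Finset.mem_insert, chl, Finset.mem_filter]
  constructor
  · intro hw
    have hadj : G.Adj v w := (SimpleGraph.mem_neighborFinset _ _ _).mp hw
    rcases adj_dist_cases hT u hadj with h | h
    · right; exact ⟨hw, h⟩
    · left; exact par_eq hT u hv hadj (by omega)
  · rintro (rfl | ⟨hw, _⟩)
    · exact par_mem_nbr hT u hv
    · exact hw

lemma par_notMem_chl {v : V} (hv : v ≠ u) : par hT u v ∉ chl G u v := by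
  have hd : 0 < G.dist u v := hT.isConnected.pos_dist_of_ne (Ne.symm hv)
  have h := (par_adj hT u hv).2
  simp only [chl, Finset.mem_filter]
  rintro ⟨-, h'⟩
  omega

include hT in
lemma degree_eq {v : V} (hv : v ≠ u) :
    G.degree v = (chl G u v).card + 1 := by
  rw [← SimpleGraph.card_neighborFinset_eq_degree, nbr_split hT u hv,
    Finset.card_insert_of_notMem (par_notMem_chl hT u hv)]

lemma mem_chl_iff {v w : V} (hv : v ≠ u) :
    w ∈ chl G u v ↔ (w ≠ u ∧ par hT u w = v ∧ G.dist u w = G.dist u v + 1) := by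
  have hd : 0 < G.dist u v := hT.isConnected.pos_dist_of_ne (Ne.symm hv)
  simp only [chl, Finset.mem_filter, SimpleGraph.mem_neighborFinset]
  constructor
  · rintro ⟨hadj, hdist⟩
    have hw : w ≠ u := ne_u_of_dist_pos G (by omega)
    exact ⟨hw, (par_eq hT u hw hadj.symm (by omega)).symm, hdist⟩
  · rintro ⟨hw, rfl, hdist⟩
    exact ⟨((par_adj hT u hw).1).symm, hdist⟩

end Spider

end StructureDefs


section StructureDefs2

variable {V : Type*} [Fintype V] [DecidableEq V]
variable {G : SimpleGraph V} (hT : G.IsTree) (u : V)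

namespace Spider

include hT in
lemma leg_depth_inj (hdeg : ∀ w : V, w ≠ u → G.degree w ≤ 2) :
    ∀ n : ℕ, ∀ v v' : V, v ≠ u → v' ≠ u → G.dist u v = n → G.dist u v' = n →
      legOf hT u v = legOf hT u v' → v = v' := by
  intro n
  induction n with
  | zero =>
    intro v v' hv hv' h1 h2 _
    have := hT.isConnected.pos_dist_of_ne (Ne.symm hv)
    omega
  | succ n ih =>
    intro v v' hv hv' h1 h2 hleg
    rcases Nat.eq_zero_or_pos n with rfl | hn
    · have e1 := legOf_depth_one hT u (show G.dist u v = 1 by omega)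
      have e2 := legOf_depth_one hT u (show G.dist u v' = 1 by omega)
      rw [← e1, ← e2]; exact hleg
    · have hp := (par_adj hT u hv).2
      have hp' := (par_adj hT u hv').2
      have hpu : par hT u v ≠ u := ne_u_of_dist_pos G (by omega)
      have hpu' : par hT u v' ≠ u := ne_u_of_dist_pos G (by omega)
      have heq : par hT u v = par hT u v' := by
        apply ih _ _ hpu hpu' (by omega) (by omega)
        rw [legOf_par hT u (by omega), legOf_par hT u (by omega), hleg]
      have hv_mem : v ∈ chl G u (par hT u v) :=
        (mem_chl_iff hT u hpu).mpr ⟨hv, rfl, by omega⟩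
      have hv'_mem : v' ∈ chl G u (par hT u v) := by
        rw [heq]; exact (mem_chl_iff hT u hpu').mpr ⟨hv', rfl, by omega⟩
      have hcard : (chl G u (par hT u v)).card ≤ 1 := by
        have h1 := degree_eq hT u hpu
        have h2 := hdeg _ hpu
        omega
      exact Finset.card_le_one.mp hcard _ hv_mem _ hv'_mem

/-- vertices belonging to the leg of `c` -/
def legSet (c : V) : Finset V :=
  Finset.univ.filter (fun v => v ≠ u ∧ legOf hT u v = c)

/-- length of the leg of `c` -/
def legLen (c : V) : ℕ := (legSet hT u c).sup (fun v => G.dist u v)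

lemma mem_legSet {c v : V} : v ∈ legSet hT u c ↔ (v ≠ u ∧ legOf hT u v = c) := by
  simp [legSet]

lemma self_mem_legSet {c : V} (hc : G.Adj u c) : c ∈ legSet hT u c := by
  have hcu : c ≠ u := (G.ne_of_adj hc).symm
  rw [mem_legSet]
  exact ⟨hcu, legOf_depth_one hT u (SimpleGraph.dist_eq_one_iff_adj.mpr hc)⟩

lemma legLen_pos {c : V} (hc : G.Adj u c) : 1 ≤ legLen hT u c := by
  have h : G.dist u c ≤ legLen hT u c :=
    Finset.le_sup (f := fun v => G.dist u v) (self_mem_legSet hT u hc)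
  rwa [SimpleGraph.dist_eq_one_iff_adj.mpr hc] at h

lemma depth_le_legLen {v : V} (hv : v ≠ u) : G.dist u v ≤ legLen hT u (legOf hT u v) :=
  Finset.le_sup (f := fun v => G.dist u v) ((mem_legSet hT u).mpr ⟨hv, rfl⟩)

lemma spot_exists {c : V} (hc : G.Adj u c) {j : ℕ} (h1 : 1 ≤ j) (h2 : j ≤ legLen hT u c) :
    ∃ v : V, v ≠ u ∧ legOf hT u v = c ∧ G.dist u v = j := by
  have hne : (legSet hT u c).Nonempty := ⟨c, self_mem_legSet hT u hc⟩
  obtain ⟨v₀, hv₀, hs⟩ := Finset.exists_mem_eq_sup (legSet hT u c) hne (fun v => G.dist u v)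
  rw [mem_legSet] at hv₀
  have hd₀ : G.dist u v₀ = legLen hT u c := hs.symm
  obtain ⟨ha1, ha2⟩ := anc_prop hT u (G.dist u v₀ - j) v₀ hv₀.1 (by omega)
  refine ⟨anc hT u (G.dist u v₀ - j) v₀, ha2, ?_, by omega⟩
  rw [legOf_anc hT u _ _ hv₀.1 (by omega), hv₀.2]

/-- the vertex on leg `c` at depth `j` -/
def spot (c : V) (j : ℕ) : V :=
  if h : ∃ v : V, v ≠ u ∧ legOf hT u v = c ∧ G.dist u v = j then h.choose else u

lemma spot_spec {c : V} (hc : G.Adj u c) {j : ℕ} (h1 : 1 ≤ j) (h2 : j ≤ legLen hT u c) :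
    spot hT u c j ≠ u ∧ legOf hT u (spot hT u c j) = c ∧ G.dist u (spot hT u c j) = j := by
  rw [spot, dif_pos (spot_exists hT u hc h1 h2)]
  exact (spot_exists hT u hc h1 h2).choose_spec

include hT in
lemma spot_eq (hdeg : ∀ w : V, w ≠ u → G.degree w ≤ 2) {c v : V} (hc : G.Adj u c)
    {j : ℕ} (h1 : 1 ≤ j) (h2 : j ≤ legLen hT u c)
    (hv : v ≠ u) (hlv : legOf hT u v = c) (hdv : G.dist u v = j) : spot hT u c j = v := by
  obtain ⟨s1, s2, s3⟩ := spot_spec hT u hc h1 h2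
  exact leg_depth_inj hT u hdeg j _ _ s1 hv s3 hdv (by rw [s2, hlv])

lemma spot_one {c : V} (hc : G.Adj u c) : spot hT u c 1 = c := by
  obtain ⟨s1, s2, s3⟩ := spot_spec hT u hc le_rfl (legLen_pos hT u hc)
  have h := legOf_depth_one hT u s3
  rw [s2] at h
  exact h.symm

include hT in
lemma legSet_card (hdeg : ∀ w : V, w ≠ u → G.degree w ≤ 2) {c : V} (hc : G.Adj u c) :
    (legSet hT u c).card = legLen hT u c := by
  have : legLen hT u c = (Finset.Icc 1 (legLen hT u c)).card := by
    rw [Nat.card_Icc]; omega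
  rw [this]
  apply Finset.card_bij (fun v _ => G.dist u v)
  · intro v hv
    rw [mem_legSet] at hv
    rw [Finset.mem_Icc]
    constructor
    · have := hT.isConnected.pos_dist_of_ne (Ne.symm hv.1); omega
    · rw [← hv.2]; exact depth_le_legLen hT u hv.1
  · intro v hv v' hv' h
    rw [mem_legSet] at hv hv'
    exact leg_depth_inj hT u hdeg _ _ _ hv.1 hv'.1 rfl h.symm (by rw [hv.2, hv'.2])
  · intro j hj
    rw [Finset.mem_Icc] at hj
    obtain ⟨v, h1, h2, h3⟩ := spot_exists hT u hc hj.1 hj.2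
    exact ⟨v, (mem_legSet hT u).mpr ⟨h1, h2⟩, h3⟩

include hT in
lemma sum_legLen (hdeg : ∀ w : V, w ≠ u → G.degree w ≤ 2) :
    ∑ c ∈ G.neighborFinset u, legLen hT u c = Fintype.card V - 1 := by
  have hsplit : Finset.univ.erase u = (G.neighborFinset u).biUnion (fun c => legSet hT u c) := by
    ext v
    simp only [Finset.mem_erase, Finset.mem_univ, and_true, Finset.mem_biUnion]
    constructor
    · intro hv
      exact ⟨legOf hT u v, (SimpleGraph.mem_neighborFinset _ _ _).mpr (legOf_adj hT u hv),
        (mem_legSet hT u).mpr ⟨hv, rfl⟩⟩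
    · rintro ⟨c, -, hv⟩
      exact ((mem_legSet hT u).mp hv).1
  have hdisj : ∀ c₁ ∈ G.neighborFinset u, ∀ c₂ ∈ G.neighborFinset u, c₁ ≠ c₂ →
      Disjoint (legSet hT u c₁) (legSet hT u c₂) := by
    intro c₁ _ c₂ _ hne
    rw [Finset.disjoint_left]
    intro v h1 h2
    rw [mem_legSet] at h1 h2
    exact hne (h1.2 ▸ h2.2 ▸ rfl)
  have hcard := congrArg Finset.card hsplit
  rw [Finset.card_erase_of_mem (Finset.mem_univ u), Finset.card_univ,
    Finset.card_biUnion hdisj] at hcard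
  have hc2 : ∑ c ∈ G.neighborFinset u, legLen hT u c
      = ∑ c ∈ G.neighborFinset u, (legSet hT u c).card :=
    Finset.sum_congr rfl (fun c hc =>
      (legSet_card hT u hdeg ((SimpleGraph.mem_neighborFinset _ _ _).mp hc)).symm)
  rw [hc2]
  exact hcard.symm

include hT in
lemma chl_of_lt (hdeg : ∀ w : V, w ≠ u → G.degree w ≤ 2) {v : V} (hv : v ≠ u)
    (hlt : G.dist u v < legLen hT u (legOf hT u v)) :
    chl G u v = {spot hT u (legOf hT u v) (G.dist u v + 1)} := by
  have hd : 0 < G.dist u v := hT.isConnected.pos_dist_of_ne (Ne.symm hv)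
  have hc : G.Adj u (legOf hT u v) := legOf_adj hT u hv
  obtain ⟨s1, s2, s3⟩ := spot_spec hT u hc (j := G.dist u v + 1) (by omega) (by omega)
  have hmem : spot hT u (legOf hT u v) (G.dist u v + 1) ∈ chl G u v := by
    rw [mem_chl_iff hT u hv]
    refine ⟨s1, ?_, s3⟩
    have hp := (par_adj hT u s1).2
    apply leg_depth_inj hT u hdeg (G.dist u v) _ _ (ne_u_of_dist_pos G (by omega)) hv
      (by omega) rfl
    rw [legOf_par hT u (by omega), s2]
  have hcard : (chl G u v).card ≤ 1 := by
    have h1 := degree_eq hT u hv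
    have h2 := hdeg _ hv
    omega
  apply Finset.eq_singleton_iff_unique_mem.mpr
  exact ⟨hmem, fun x hx => Finset.card_le_one.mp hcard _ hx _ hmem⟩

include hT in
lemma chl_of_eq {v : V} (hv : v ≠ u)
    (heq : G.dist u v = legLen hT u (legOf hT u v)) : chl G u v = ∅ := by
  rw [Finset.eq_empty_iff_forall_notMem]
  have hd : 0 < G.dist u v := hT.isConnected.pos_dist_of_ne (Ne.symm hv)
  intro w hw
  rw [mem_chl_iff hT u hv] at hw
  obtain ⟨hwu, hpw, hdw⟩ := hw
  have hleg : legOf hT u w = legOf hT u v := by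
    rw [← legOf_par hT u (by omega), hpw]
  have := depth_le_legLen hT u hwu
  rw [hleg] at this
  omega

end Spider

end StructureDefs2


section ArithDefs

variable {V : Type*} [Fintype V] [DecidableEq V]
variable {G : SimpleGraph V} (hT : G.IsTree) (u : V)

namespace Spider

/-- total number of "low" (= "high") labels -/
def PP : ℕ := ∑ c ∈ G.neighborFinset u, legLen hT u c / 2

/-- odd legs -/
def OO : Finset V := (G.neighborFinset u).filter (fun c => legLen hT u c % 2 = 1)

def oo : ℕ := (OO hT u).card

/-- legs of length ≥ 2 -/
def BigF : Finset V := (G.neighborFinset u).filter (fun c => 2 ≤ legLen hT u c)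

/-- odd legs of length ≥ 3 -/
def O3F : Finset V := (G.neighborFinset u).filter
  (fun c => legLen hT u c % 2 = 1 ∧ 2 ≤ legLen hT u c)

def o3 : ℕ := (O3F hT u).card

def q3 : ℕ := ∑ c ∈ O3F hT u, legLen hT u c / 2

/-- number of edges -/
def mm : ℕ := ∑ c ∈ G.neighborFinset u, legLen hT u c

/-- arbitrary injection into ℕ -/
def rho : V → ℕ := fun v => ((Fintype.equivFin V) v : ℕ)

lemma rho_inj : Function.Injective (rho (V := V)) := by
  intro a b h
  have := (Fintype.equivFin V).injective (Fin.ext h)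
  exact this

lemma rho_lt (v : V) : rho v < Fintype.card V := (Fintype.equivFin V v).isLt

/-- processing-order key: odd big legs first, then even legs -/
def kap (c : V) : ℕ := (if legLen hT u c % 2 = 1 then 0 else Fintype.card V) + rho c

/-- tiny-rank key: big odd legs first, then 1-legs -/
def kap' (c : V) : ℕ := (if 2 ≤ legLen hT u c then 0 else Fintype.card V) + rho c

lemma kap_inj {c c' : V} (h : kap hT u c = kap hT u c') : c = c' := by
  rw [kap, kap] at h
  have h1 := rho_lt c
  have h2 := rho_lt c'
  split_ifs at h <;> [skip; omega; omega; skip] <;> exact rho_inj (by omega)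

lemma kap'_inj {c c' : V} (h : kap' hT u c = kap' hT u c') : c = c' := by
  rw [kap', kap'] at h
  have h1 := rho_lt c
  have h2 := rho_lt c'
  split_ifs at h <;> [skip; omega; omega; skip] <;> exact rho_inj (by omega)

/-- cumulative low/high consumption before leg c -/
def QQ (c : V) : ℕ :=
  ∑ c' ∈ (BigF hT u).filter (fun c' => kap hT u c' < kap hT u c), legLen hT u c' / 2

/-- tiny rank among odd legs -/
def tt (c : V) : ℕ := ((OO hT u).filter (fun c' => kap' hT u c' ≤ kap' hT u c)).card

lemma mm_eq : mm hT u = 2 * PP hT u + oo hT u := by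
  rw [mm, PP, oo, OO, Finset.card_filter]
  rw [show ∑ c ∈ G.neighborFinset u, legLen hT u c
      = ∑ c ∈ G.neighborFinset u,
        (2 * (legLen hT u c / 2) + (if legLen hT u c % 2 = 1 then 1 else 0)) from
    Finset.sum_congr rfl (fun c _ => by
      have h1 := Nat.div_add_mod (legLen hT u c) 2
      have h2 := Nat.mod_two_eq_zero_or_one (legLen hT u c)
      split_ifs <;> omega)]
  rw [Finset.sum_add_distrib, ← Finset.mul_sum]

lemma QQ_le {c : V} (hc : c ∈ BigF hT u) : QQ hT u c + legLen hT u c / 2 ≤ PP hT u := by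
  have hsub : insert c ((BigF hT u).filter (fun c' => kap hT u c' < kap hT u c))
      ⊆ G.neighborFinset u := by
    intro x hx
    rcases Finset.mem_insert.mp hx with rfl | hx
    · exact Finset.mem_of_mem_filter _ (by exact hc)
    · exact Finset.mem_of_mem_filter _ (Finset.mem_of_mem_filter _ hx)
  have hnotmem : c ∉ (BigF hT u).filter (fun c' => kap hT u c' < kap hT u c) := by
    simp
  have := Finset.sum_le_sum_of_subset (f := fun c' => legLen hT u c' / 2) hsub
  rw [Finset.sum_insert hnotmem] at this
  rw [QQ, PP]
  omega

lemma QQ_mono {c c' : V} (hc : c ∈ BigF hT u) (h : kap hT u c < kap hT u c') :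
    QQ hT u c + legLen hT u c / 2 ≤ QQ hT u c' := by
  have hsub : insert c ((BigF hT u).filter (fun x => kap hT u x < kap hT u c))
      ⊆ (BigF hT u).filter (fun x => kap hT u x < kap hT u c') := by
    intro x hx
    rcases Finset.mem_insert.mp hx with rfl | hx
    · exact Finset.mem_filter.mpr ⟨hc, h⟩
    · rw [Finset.mem_filter] at hx ⊢
      exact ⟨hx.1, by omega⟩
  have hnotmem : c ∉ (BigF hT u).filter (fun x => kap hT u x < kap hT u c) := by
    simp
  have := Finset.sum_le_sum_of_subset (f := fun c' => legLen hT u c' / 2) hsub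
  rw [Finset.sum_insert hnotmem] at this
  rw [QQ, QQ]
  omega

lemma tt_pos {c : V} (hc : c ∈ OO hT u) : 1 ≤ tt hT u c := by
  rw [tt]
  exact Finset.card_pos.mpr ⟨c, Finset.mem_filter.mpr ⟨hc, le_rfl⟩⟩

lemma tt_le {c : V} : tt hT u c ≤ oo hT u :=
  Finset.card_le_card (Finset.filter_subset _ _)

lemma tt_mono {c c' : V} (hc' : c' ∈ OO hT u) (h : kap' hT u c < kap' hT u c') :
    tt hT u c < tt hT u c' := by
  have hsub : insert c' ((OO hT u).filter (fun x => kap' hT u x ≤ kap' hT u c))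
      ⊆ (OO hT u).filter (fun x => kap' hT u x ≤ kap' hT u c') := by
    intro x hx
    rcases Finset.mem_insert.mp hx with rfl | hx
    · exact Finset.mem_filter.mpr ⟨hc', le_rfl⟩
    · rw [Finset.mem_filter] at hx ⊢
      exact ⟨hx.1, by omega⟩
  have hnotmem : c' ∉ (OO hT u).filter (fun x => kap' hT u x ≤ kap' hT u c) := by
    rw [Finset.mem_filter]
    rintro ⟨-, h'⟩
    omega
  have := Finset.card_le_card hsub
  rw [Finset.card_insert_of_notMem hnotmem] at this
  rw [tt, tt]
  omega

lemma kap_eq_kap'_of_O3 {c : V} (hc : c ∈ O3F hT u) :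
    kap hT u c = rho c ∧ kap' hT u c = rho c := by
  rw [O3F, Finset.mem_filter] at hc
  rw [kap, kap', if_pos hc.2.1, if_pos hc.2.2]
  omega

lemma tt_le_o3 {c : V} (hc : c ∈ O3F hT u) : tt hT u c ≤ o3 hT u := by
  rw [tt, o3]
  apply Finset.card_le_card
  intro x hx
  rw [Finset.mem_filter] at hx
  obtain ⟨hxO, hxk⟩ := hx
  rw [OO, Finset.mem_filter] at hxO
  rw [O3F, Finset.mem_filter]
  refine ⟨hxO.1, hxO.2, ?_⟩
  by_contra hx2
  rw [kap', if_neg hx2] at hxk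
  have h1 := rho_lt x
  have h2 := (kap_eq_kap'_of_O3 hT u hc).2
  have h3 := rho_lt c
  omega

lemma QQ_le_q3_of_O3 {c : V} (hc : c ∈ O3F hT u) :
    QQ hT u c + legLen hT u c / 2 ≤ q3 hT u := by
  have hcB : c ∈ BigF hT u := by
    rw [O3F, Finset.mem_filter] at hc
    rw [BigF, Finset.mem_filter]
    exact ⟨hc.1, hc.2.2⟩
  have hsub : insert c ((BigF hT u).filter (fun x => kap hT u x < kap hT u c))
      ⊆ O3F hT u := by
    intro x hx
    rcases Finset.mem_insert.mp hx with rfl | hx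
    · exact hc
    · rw [Finset.mem_filter] at hx
      obtain ⟨hxB, hxk⟩ := hx
      rw [BigF, Finset.mem_filter] at hxB
      rw [O3F, Finset.mem_filter]
      refine ⟨hxB.1, ?_, hxB.2⟩
      by_contra hx2
      rw [kap] at hxk
      rw [if_neg hx2] at hxk
      have h1 := rho_lt x
      have h2 := (kap_eq_kap'_of_O3 hT u hc).1
      have h3 := rho_lt c
      omega
  have hnotmem : c ∉ (BigF hT u).filter (fun x => kap hT u x < kap hT u c) := by simp
  have := Finset.sum_le_sum_of_subset (f := fun c' => legLen hT u c' / 2) hsub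
  rw [Finset.sum_insert hnotmem] at this
  rw [QQ, q3]
  omega

lemma q3_le_QQ_of_even {c : V} (hc : c ∈ BigF hT u) (hev : legLen hT u c % 2 = 0) :
    q3 hT u ≤ QQ hT u c := by
  rw [q3, QQ]
  apply Finset.sum_le_sum_of_subset
  intro x hx
  rw [O3F, Finset.mem_filter] at hx
  rw [Finset.mem_filter]
  constructor
  · rw [BigF, Finset.mem_filter]; exact ⟨hx.1, hx.2.2⟩
  · have h1 := rho_lt x
    rw [kap, kap, if_pos hx.2.1, if_neg (by omega)]
    omega

lemma q3_le_PP : q3 hT u ≤ PP hT u := by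
  rw [q3, PP]
  apply Finset.sum_le_sum_of_subset
  intro x hx
  rw [O3F, Finset.mem_filter] at hx
  exact hx.1

lemma o3_le_oo : o3 hT u ≤ oo hT u := by
  rw [o3, oo]
  apply Finset.card_le_card
  intro x hx
  rw [O3F, Finset.mem_filter] at hx
  rw [OO, Finset.mem_filter]
  exact ⟨hx.1, hx.2.1⟩

end Spider

end ArithDefs


section LabelDefs

variable {V : Type*} [Fintype V] [DecidableEq V]
variable {G : SimpleGraph V} (hT : G.IsTree) (u : V)

namespace Spider

/-- the label of the edge from `v` up to its parent -/
def gg (lB tB : ℕ) (v : V) : ℕ :=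
  if legLen hT u (legOf hT u v) % 2 = 1 ∧ G.dist u v = legLen hT u (legOf hT u v)
  then tB + oo hT u + 1 - tt hT u (legOf hT u v)
  else if G.dist u v % 2 = 1
  then mm hT u - QQ hT u (legOf hT u v) - G.dist u v / 2
  else lB + PP hT u + 1 - QQ hT u (legOf hT u v) - G.dist u v / 2

lemma basic_facts {v : V} (hv : v ≠ u) :
    legOf hT u v ∈ G.neighborFinset u ∧ 1 ≤ G.dist u v ∧
    G.dist u v ≤ legLen hT u (legOf hT u v) ∧
    G.dist u (legOf hT u v) = 1 ∧ 1 ≤ legLen hT u (legOf hT u v) := by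
  have hadj : G.Adj u (legOf hT u v) := legOf_adj hT u hv
  refine ⟨(SimpleGraph.mem_neighborFinset _ _ _).mpr hadj,
    hT.isConnected.pos_dist_of_ne (Ne.symm hv), depth_le_legLen hT u hv,
    legOf_depth hT u hv, legLen_pos hT u hadj⟩

lemma gg_tiny {v : V} (hv : v ≠ u) (lB tB : ℕ)
    (h1 : legLen hT u (legOf hT u v) % 2 = 1 ∧ G.dist u v = legLen hT u (legOf hT u v)) :
    gg hT u lB tB v = tB + oo hT u + 1 - tt hT u (legOf hT u v) ∧
    tB + 1 ≤ gg hT u lB tB v ∧ gg hT u lB tB v ≤ tB + oo hT u ∧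
    1 ≤ tt hT u (legOf hT u v) ∧ tt hT u (legOf hT u v) ≤ oo hT u ∧
    legOf hT u v ∈ OO hT u := by
  obtain ⟨hN, hd1, hdle, -, -⟩ := basic_facts hT u hv
  have hO : legOf hT u v ∈ OO hT u := by
    rw [OO, Finset.mem_filter]; exact ⟨hN, h1.1⟩
  have ht1 := tt_pos hT u hO
  have ht2 := tt_le hT u (c := legOf hT u v)
  rw [gg, if_pos h1]
  refine ⟨rfl, by omega, by omega, ht1, ht2, hO⟩

lemma gg_high {v : V} (hv : v ≠ u) (lB tB : ℕ)
    (h1 : ¬(legLen hT u (legOf hT u v) % 2 = 1 ∧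
      G.dist u v = legLen hT u (legOf hT u v)))
    (h2 : G.dist u v % 2 = 1) :
    gg hT u lB tB v = mm hT u - QQ hT u (legOf hT u v) - G.dist u v / 2 ∧
    oo hT u + PP hT u + 1 ≤ gg hT u lB tB v ∧ gg hT u lB tB v ≤ mm hT u ∧
    QQ hT u (legOf hT u v) + G.dist u v / 2 + 1 ≤ PP hT u ∧
    G.dist u v / 2 + 1 ≤ legLen hT u (legOf hT u v) / 2 ∧
    legOf hT u v ∈ BigF hT u := by
  obtain ⟨hN, hd1, hdle, -, hl1⟩ := basic_facts hT u hv
  have hBig : legOf hT u v ∈ BigF hT u := by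
    rw [BigF, Finset.mem_filter]
    refine ⟨hN, ?_⟩
    omega
  have hQ := QQ_le hT u hBig
  have hjb : G.dist u v / 2 + 1 ≤ legLen hT u (legOf hT u v) / 2 := by omega
  have hm := mm_eq hT u
  rw [gg, if_neg h1, if_pos h2]
  refine ⟨rfl, by omega, by omega, by omega, hjb, hBig⟩

lemma gg_low {v : V} (hv : v ≠ u) (lB tB : ℕ)
    (h2 : G.dist u v % 2 = 0) :
    gg hT u lB tB v = lB + PP hT u + 1 - QQ hT u (legOf hT u v) - G.dist u v / 2 ∧
    lB + 1 ≤ gg hT u lB tB v ∧ gg hT u lB tB v ≤ lB + PP hT u ∧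
    1 ≤ G.dist u v / 2 ∧
    QQ hT u (legOf hT u v) + G.dist u v / 2 ≤ PP hT u ∧
    G.dist u v / 2 ≤ legLen hT u (legOf hT u v) / 2 ∧
    legOf hT u v ∈ BigF hT u ∧
    ¬(legLen hT u (legOf hT u v) % 2 = 1 ∧
      G.dist u v = legLen hT u (legOf hT u v)) := by
  obtain ⟨hN, hd1, hdle, -, hl1⟩ := basic_facts hT u hv
  have h1 : ¬(legLen hT u (legOf hT u v) % 2 = 1 ∧
      G.dist u v = legLen hT u (legOf hT u v)) := by
    rintro ⟨ha, hb⟩; omega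
  have hBig : legOf hT u v ∈ BigF hT u := by
    rw [BigF, Finset.mem_filter]
    exact ⟨hN, by omega⟩
  have hQ := QQ_le hT u hBig
  have hjb : G.dist u v / 2 ≤ legLen hT u (legOf hT u v) / 2 := by omega
  rw [gg, if_neg h1, if_neg (show ¬(G.dist u v % 2 = 1) by omega)]
  refine ⟨rfl, by omega, by omega, by omega, by omega, hjb, hBig, h1⟩

lemma gg_pos {v : V} (hv : v ≠ u) (lB tB : ℕ) : 1 ≤ gg hT u lB tB v := by
  by_cases h1 : legLen hT u (legOf hT u v) % 2 = 1 ∧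
      G.dist u v = legLen hT u (legOf hT u v)
  · have := gg_tiny hT u hv lB tB h1; omega
  · rcases Nat.mod_two_eq_zero_or_one (G.dist u v) with h2 | h2
    · have := gg_low hT u hv lB tB h2; omega
    · have := gg_high hT u hv lB tB h1 h2; omega

lemma gg_le_mm {v : V} (hv : v ≠ u) {lB tB : ℕ}
    (hLay : lB = oo hT u ∧ tB = 0 ∨ lB = 0 ∧ tB = PP hT u) :
    gg hT u lB tB v ≤ mm hT u := by
  have hm := mm_eq hT u
  by_cases h1 : legLen hT u (legOf hT u v) % 2 = 1 ∧
      G.dist u v = legLen hT u (legOf hT u v)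
  · have := gg_tiny hT u hv lB tB h1
    rcases hLay with ⟨rfl, rfl⟩ | ⟨rfl, rfl⟩ <;> omega
  · rcases Nat.mod_two_eq_zero_or_one (G.dist u v) with h2 | h2
    · have := gg_low hT u hv lB tB h2
      rcases hLay with ⟨rfl, rfl⟩ | ⟨rfl, rfl⟩ <;> omega
    · have := gg_high hT u hv lB tB h1 h2; omega

include hT in
lemma gg_inj (hdeg : ∀ w : V, w ≠ u → G.degree w ≤ 2) {lB tB : ℕ}
    (hLay : lB = oo hT u ∧ tB = 0 ∨ lB = 0 ∧ tB = PP hT u)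
    {v v' : V} (hv : v ≠ u) (hv' : v' ≠ u)
    (h : gg hT u lB tB v = gg hT u lB tB v') : v = v' := by
  obtain ⟨hN, hd1, hdle, -, hl1⟩ := basic_facts hT u hv
  obtain ⟨hN', hd1', hdle', -, hl1'⟩ := basic_facts hT u hv'
  have hm := mm_eq hT u
  by_cases h1 : legLen hT u (legOf hT u v) % 2 = 1 ∧
      G.dist u v = legLen hT u (legOf hT u v)
  · obtain ⟨e1, r1, r2, r3, r4, hO⟩ := gg_tiny hT u hv lB tB h1
    by_cases h1' : legLen hT u (legOf hT u v') % 2 = 1 ∧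
        G.dist u v' = legLen hT u (legOf hT u v')
    · obtain ⟨e1', r1', r2', r3', r4', hO'⟩ := gg_tiny hT u hv' lB tB h1'
      rw [e1, e1'] at h
      have htt : tt hT u (legOf hT u v) = tt hT u (legOf hT u v') := by omega
      have hcc : legOf hT u v = legOf hT u v' := by
        by_contra hne
        rcases lt_trichotomy (kap' hT u (legOf hT u v)) (kap' hT u (legOf hT u v')) with
          hlt | heq | hlt
        · have := tt_mono hT u hO' hlt; omega
        · exact hne (kap'_inj hT u heq)
        · have := tt_mono hT u hO hlt; omega
      refine leg_depth_inj hT u hdeg (G.dist u v) _ _ hv hv' rfl ?_ hcc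
      rw [h1'.2, h1.2, hcc]
    · rcases Nat.mod_two_eq_zero_or_one (G.dist u v') with h2' | h2'
      · obtain ⟨e1', r1', r2', -⟩ := gg_low hT u hv' lB tB h2'
        rcases hLay with ⟨rfl, rfl⟩ | ⟨rfl, rfl⟩ <;> omega
      · obtain ⟨e1', r1', r2', -⟩ := gg_high hT u hv' lB tB h1' h2'
        rcases hLay with ⟨rfl, rfl⟩ | ⟨rfl, rfl⟩ <;> omega
  · rcases Nat.mod_two_eq_zero_or_one (G.dist u v) with h2 | h2
    · obtain ⟨e1, r1, r2, r3, r4, r5, hB, -⟩ := gg_low hT u hv lB tB h2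
      by_cases h1' : legLen hT u (legOf hT u v') % 2 = 1 ∧
          G.dist u v' = legLen hT u (legOf hT u v')
      · obtain ⟨e1', r1', r2', -⟩ := gg_tiny hT u hv' lB tB h1'
        rcases hLay with ⟨rfl, rfl⟩ | ⟨rfl, rfl⟩ <;> omega
      · rcases Nat.mod_two_eq_zero_or_one (G.dist u v') with h2' | h2'
        · -- low low
          obtain ⟨e1', r1', r2', r3', r4', r5', hB', -⟩ := gg_low hT u hv' lB tB h2'
          rw [e1, e1'] at h
          have hQ : QQ hT u (legOf hT u v) + G.dist u v / 2
              = QQ hT u (legOf hT u v') + G.dist u v' / 2 := by omega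
          have hcc : legOf hT u v = legOf hT u v' := by
            by_contra hne
            rcases lt_trichotomy (kap hT u (legOf hT u v)) (kap hT u (legOf hT u v')) with
              hlt | heq | hlt
            · have := QQ_mono hT u hB hlt; omega
            · exact hne (kap_inj hT u heq)
            · have := QQ_mono hT u hB' hlt; omega
          rw [hcc] at hQ
          refine leg_depth_inj hT u hdeg (G.dist u v) _ _ hv hv' rfl (by omega) hcc
        · -- low vs high
          obtain ⟨e1', r1', r2', -⟩ := gg_high hT u hv' lB tB h1' h2'
          rcases hLay with ⟨rfl, rfl⟩ | ⟨rfl, rfl⟩ <;> omega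
    · obtain ⟨e1, r1, r2, r3, r4, hB⟩ := gg_high hT u hv lB tB h1 h2
      by_cases h1' : legLen hT u (legOf hT u v') % 2 = 1 ∧
          G.dist u v' = legLen hT u (legOf hT u v')
      · obtain ⟨e1', r1', r2', -⟩ := gg_tiny hT u hv' lB tB h1'
        rcases hLay with ⟨rfl, rfl⟩ | ⟨rfl, rfl⟩ <;> omega
      · rcases Nat.mod_two_eq_zero_or_one (G.dist u v') with h2' | h2'
        · obtain ⟨e1', r1', r2', -⟩ := gg_low hT u hv' lB tB h2'
          rcases hLay with ⟨rfl, rfl⟩ | ⟨rfl, rfl⟩ <;> omega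
        · -- high high
          obtain ⟨e1', r1', r2', r3', r4', hB'⟩ := gg_high hT u hv' lB tB h1' h2'
          rw [e1, e1'] at h
          have hQ : QQ hT u (legOf hT u v) + G.dist u v / 2
              = QQ hT u (legOf hT u v') + G.dist u v' / 2 := by omega
          have hcc : legOf hT u v = legOf hT u v' := by
            by_contra hne
            rcases lt_trichotomy (kap hT u (legOf hT u v)) (kap hT u (legOf hT u v')) with
              hlt | heq | hlt
            · have := QQ_mono hT u hB hlt; omega
            · exact hne (kap_inj hT u heq)
            · have := QQ_mono hT u hB' hlt; omega
          rw [hcc] at hQ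
          refine leg_depth_inj hT u hdeg (G.dist u v) _ _ hv hv' rfl (by omega) hcc

end Spider

end LabelDefs


section EdgeLabel

variable {V : Type*} [Fintype V] [DecidableEq V]
variable {G : SimpleGraph V} (hT : G.IsTree) (u : V)

namespace Spider

/-- the edge labeling -/
def ff (lB tB : ℕ) : Sym2 V → ℕ :=
  Sym2.lift ⟨fun x y =>
    if G.dist u x < G.dist u y then gg hT u lB tB y
    else if G.dist u y < G.dist u x then gg hT u lB tB x else 0, by
      intro x y
      dsimp only
      split_ifs <;> first | rfl | omega⟩

lemma ff_up (lB tB : ℕ) {v w : V} (hd : G.dist u v < G.dist u w) :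
    ff hT u lB tB s(v, w) = gg hT u lB tB w := by
  rw [ff, Sym2.lift_mk]
  dsimp only
  rw [if_pos hd]

lemma ff_edge (lB tB : ℕ) {w : V} (hw : w ≠ u) :
    ff hT u lB tB s(w, par hT u w) = gg hT u lB tB w := by
  have hp := (par_adj hT u hw).2
  have hd : 1 ≤ G.dist u w := hT.isConnected.pos_dist_of_ne (Ne.symm hw)
  rw [ff, Sym2.lift_mk]
  dsimp only
  rw [if_neg (by omega), if_pos (by omega)]

lemma edge_char {e : Sym2 V} (he : e ∈ edges G) :
    ∃ w : V, w ≠ u ∧ e = s(w, par hT u w) := by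
  have he' : e ∈ G.edgeSet := by
    rw [edges, Finset.mem_filter] at he; exact he.2
  induction e with
  | _ x y =>
    rw [SimpleGraph.mem_edgeSet] at he'
    rcases adj_dist_cases hT u he' with hcase | hcase
    · -- dist y = dist x + 1 : y is the far endpoint
      have hy : y ≠ u := by
        have : 0 < G.dist u y := by omega
        exact ne_u_of_dist_pos G this
      have hpar : x = par hT u y := par_eq hT u hy he'.symm (by omega)
      exact ⟨y, hy, by rw [Sym2.eq_swap, hpar]⟩
    · have hx : x ≠ u := by
        have : 0 < G.dist u x := by omega
        exact ne_u_of_dist_pos G this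
      have hpar : y = par hT u x := par_eq hT u hx he' (by omega)
      exact ⟨x, hx, by rw [hpar]⟩

lemma edge_of_ne {w : V} (hw : w ≠ u) : s(w, par hT u w) ∈ edges G := by
  rw [edges, Finset.mem_filter]
  exact ⟨Finset.mem_univ _, (SimpleGraph.mem_edgeSet G).mpr (par_adj hT u hw).1⟩

include hT in
lemma edges_card (hdeg : ∀ w : V, w ≠ u → G.degree w ≤ 2) :
    (edges G).card = mm hT u := by
  rw [edges_eq]
  have h1 := hT.card_edgeFinset
  have h2 := sum_legLen hT u hdeg
  rw [mm]
  omega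

include hT in
lemma ff_bijOn (hdeg : ∀ w : V, w ≠ u → G.degree w ≤ 2) {lB tB : ℕ}
    (hLay : lB = oo hT u ∧ tB = 0 ∨ lB = 0 ∧ tB = PP hT u) :
    Set.BijOn (ff hT u lB tB) (edges G : Set (Sym2 V))
      (Set.Icc 1 (edges G).card) := by
  have hmc := edges_card hT u hdeg
  have hmaps : ∀ e ∈ edges G, ff hT u lB tB e ∈ Finset.Icc 1 (mm hT u) := by
    intro e he
    obtain ⟨w, hw, rfl⟩ := edge_char hT u he
    rw [ff_edge hT u lB tB hw, Finset.mem_Icc]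
    exact ⟨gg_pos hT u hw lB tB, gg_le_mm hT u hw hLay⟩
  have hinj : ∀ e ∈ edges G, ∀ e' ∈ edges G,
      ff hT u lB tB e = ff hT u lB tB e' → e = e' := by
    intro e he e' he' hfe
    obtain ⟨w, hw, rfl⟩ := edge_char hT u he
    obtain ⟨w', hw', rfl⟩ := edge_char hT u he'
    rw [ff_edge hT u lB tB hw, ff_edge hT u lB tB hw'] at hfe
    rw [gg_inj hT u hdeg hLay hw hw' hfe]
  have himg : (edges G).image (ff hT u lB tB) = Finset.Icc 1 (mm hT u) := by
    apply Finset.eq_of_subset_of_card_le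
    · intro y hy
      obtain ⟨e, he, rfl⟩ := Finset.mem_image.mp hy
      exact hmaps e he
    · rw [Nat.card_Icc, Finset.card_image_of_injOn (fun e he e' he' => hinj e he e' he')]
      omega
  refine ⟨?_, ?_, ?_⟩
  · intro e he
    rw [Finset.mem_coe] at he
    have := hmaps e he
    rw [Finset.mem_Icc] at this
    rw [Set.mem_Icc, hmc]
    exact this
  · intro e he e' he' hfe
    rw [Finset.mem_coe] at he he'
    exact hinj e he e' he' hfe
  · intro y hy
    rw [Set.mem_Icc, hmc] at hy
    have : y ∈ Finset.Icc 1 (mm hT u) := Finset.mem_Icc.mpr hy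
    rw [← himg] at this
    obtain ⟨e, he, hfe⟩ := Finset.mem_image.mp this
    exact ⟨e, Finset.mem_coe.mpr he, hfe⟩

include hT in
lemma phi_leaf {v : V} (hv : v ≠ u) (lB tB : ℕ)
    (hleaf : G.dist u v = legLen hT u (legOf hT u v)) :
    phi G (ff hT u lB tB) v = gg hT u lB tB v := by
  rw [phi_eq, nbr_split hT u hv, chl_of_eq hT u hv hleaf,
    Finset.sum_insert (Finset.notMem_empty _), Finset.sum_empty, Nat.add_zero]
  exact ff_edge hT u lB tB hv

include hT in
lemma phi_internal (hdeg : ∀ w : V, w ≠ u → G.degree w ≤ 2) {v : V} (hv : v ≠ u)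
    (lB tB : ℕ) (hint : G.dist u v < legLen hT u (legOf hT u v)) :
    phi G (ff hT u lB tB) v
      = gg hT u lB tB v
        + gg hT u lB tB (spot hT u (legOf hT u v) (G.dist u v + 1)) := by
  have hchl := chl_of_lt hT u hdeg hv hint
  have hnm := par_notMem_chl hT u hv
  rw [hchl] at hnm
  have hd : 1 ≤ G.dist u v := hT.isConnected.pos_dist_of_ne (Ne.symm hv)
  obtain ⟨s1, s2, s3⟩ := spot_spec hT u (legOf_adj hT u hv)
    (j := G.dist u v + 1) (by omega) (by omega)
  rw [phi_eq, nbr_split hT u hv, hchl, Finset.sum_insert hnm, Finset.sum_singleton,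
    ff_edge hT u lB tB hv, ff_up hT u lB tB (by omega)]

include hT in
lemma phi_center (lB tB : ℕ) :
    phi G (ff hT u lB tB) u = ∑ c ∈ G.neighborFinset u, gg hT u lB tB c := by
  rw [phi_eq]
  apply Finset.sum_congr rfl
  intro c hc
  rw [SimpleGraph.mem_neighborFinset] at hc
  have h1 : G.dist u c = 1 := SimpleGraph.dist_eq_one_iff_adj.mpr hc
  have h0 : G.dist u u = 0 := SimpleGraph.dist_self
  exact ff_up hT u lB tB (by omega)

/-- value of the top label of each leg -/
lemma gg_top (lB tB : ℕ) {c : V} (hc : c ∈ G.neighborFinset u) :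
    (2 ≤ legLen hT u c → gg hT u lB tB c = mm hT u - QQ hT u c) ∧
    (legLen hT u c = 1 → gg hT u lB tB c = tB + oo hT u + 1 - tt hT u c) := by
  rw [SimpleGraph.mem_neighborFinset] at hc
  have hcu : c ≠ u := (G.ne_of_adj hc).symm
  have h1 : G.dist u c = 1 := SimpleGraph.dist_eq_one_iff_adj.mpr hc
  have hlo : legOf hT u c = c := legOf_depth_one hT u h1
  constructor
  · intro h2
    have := (gg_high hT u hcu lB tB (by rw [hlo]; omega) (by omega)).1
    rw [hlo, h1] at this
    simpa using this
  · intro h2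
    have := (gg_tiny hT u hcu lB tB (by rw [hlo]; omega)).1
    rw [hlo] at this
    exact this

lemma sum_ge_two {s : Finset V} (f : V → ℕ) {a b : V} (ha : a ∈ s) (hb : b ∈ s)
    (hab : a ≠ b) : f a + f b ≤ ∑ x ∈ s, f x := by
  rw [← Finset.add_sum_erase s f ha]
  have hb' : b ∈ s.erase a := Finset.mem_erase.mpr ⟨Ne.symm hab, hb⟩
  have := Finset.single_le_sum (f := f) (fun i _ => Nat.zero_le _) hb'
  omega

lemma sum_ge_three {s : Finset V} (f : V → ℕ) {a b c : V} (ha : a ∈ s) (hb : b ∈ s)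
    (hc : c ∈ s) (hab : a ≠ b) (hac : a ≠ c) (hbc : b ≠ c) :
    f a + f b + f c ≤ ∑ x ∈ s, f x := by
  rw [← Finset.add_sum_erase s f ha]
  have hb' : b ∈ s.erase a := Finset.mem_erase.mpr ⟨Ne.symm hab, hb⟩
  have hc' : c ∈ s.erase a := Finset.mem_erase.mpr ⟨Ne.symm hac, hc⟩
  have := sum_ge_two f hb' hc' hbc
  omega

end Spider

end EdgeLabel


section InternalSums

variable {V : Type*} [Fintype V] [DecidableEq V]
variable {G : SimpleGraph V} (hT : G.IsTree) (u : V)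

namespace Spider

include hT in
/-- Value and bounds for the vertex sum of an internal vertex. -/
lemma isum_spec (lB tB : ℕ) {v : V} (hv : v ≠ u)
    (hint : G.dist u v < legLen hT u (legOf hT u v)) :
    (¬(legLen hT u (legOf hT u v) % 2 = 1 ∧
        G.dist u v + 1 = legLen hT u (legOf hT u v)) ∧
      gg hT u lB tB v + gg hT u lB tB (spot hT u (legOf hT u v) (G.dist u v + 1))
          + 2 * QQ hT u (legOf hT u v) + G.dist u v
        = mm hT u + lB + PP hT u + 1 ∧
      2 * QQ hT u (legOf hT u v) + G.dist u v + 1 ≤ 2 * PP hT u ∧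
      G.dist u v + 1 ≤ 2 * (legLen hT u (legOf hT u v) / 2) ∧
      1 ≤ G.dist u v ∧ legOf hT u v ∈ BigF hT u) ∨
    ((legLen hT u (legOf hT u v) % 2 = 1 ∧
        G.dist u v + 1 = legLen hT u (legOf hT u v)) ∧
      gg hT u lB tB v + gg hT u lB tB (spot hT u (legOf hT u v) (G.dist u v + 1))
          + (QQ hT u (legOf hT u v) + legLen hT u (legOf hT u v) / 2)
          + tt hT u (legOf hT u v)
        = lB + PP hT u + tB + oo hT u + 2 ∧
      1 ≤ QQ hT u (legOf hT u v) + legLen hT u (legOf hT u v) / 2 ∧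
      QQ hT u (legOf hT u v) + legLen hT u (legOf hT u v) / 2 ≤ q3 hT u ∧
      1 ≤ tt hT u (legOf hT u v) ∧ tt hT u (legOf hT u v) ≤ o3 hT u ∧
      1 ≤ G.dist u v ∧ legOf hT u v ∈ O3F hT u) := by
  obtain ⟨hN, hd1, hdle, -, hl1⟩ := basic_facts hT u hv
  obtain ⟨s1, s2, s3⟩ := spot_spec hT u (legOf_adj hT u hv)
    (j := G.dist u v + 1) (by omega) (by omega)
  by_cases hτ : legLen hT u (legOf hT u v) % 2 = 1 ∧
      G.dist u v + 1 = legLen hT u (legOf hT u v)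
  · right
    have hjev : G.dist u v % 2 = 0 := by omega
    obtain ⟨e1, r1, r2, r3, r4, r5, hB, -⟩ := gg_low hT u hv lB tB hjev
    have hO3 : legOf hT u v ∈ O3F hT u := by
      rw [O3F, Finset.mem_filter]
      exact ⟨hN, hτ.1, by omega⟩
    have hO : legOf hT u v ∈ OO hT u := by
      rw [OO, Finset.mem_filter]; exact ⟨hN, hτ.1⟩
    obtain ⟨e1', r1', r2', r3', r4', -⟩ := gg_tiny hT u s1 lB tB
      (by rw [s2, s3]; exact ⟨hτ.1, hτ.2⟩)
    rw [s2] at e1'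
    have hq3 := QQ_le_q3_of_O3 hT u hO3
    have ho3 := tt_le_o3 hT u hO3
    have htp := tt_pos hT u hO
    refine ⟨hτ, by omega, by omega, hq3, htp, ho3, hd1, hO3⟩
  · left
    rcases Nat.mod_two_eq_zero_or_one (G.dist u v) with hjev | hjod
    · -- v low, w high
      obtain ⟨e1, r1, r2, r3, r4, r5, hB, -⟩ := gg_low hT u hv lB tB hjev
      obtain ⟨e1', r1', r2', r3', r4', hB'⟩ := gg_high hT u s1 lB tB
        (by rw [s2, s3]; rintro ⟨ha, hb⟩; exact hτ ⟨ha, hb⟩) (by rw [s3]; omega)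
      rw [s2, s3] at e1' r3' r4'
      refine ⟨hτ, by omega, by omega, by omega, hd1, hB⟩
    · -- v high, w low
      have hnt : ¬(legLen hT u (legOf hT u v) % 2 = 1 ∧
          G.dist u v = legLen hT u (legOf hT u v)) := by
        rintro ⟨-, hb⟩; omega
      obtain ⟨e1, r1, r2, r3, r4, hB⟩ := gg_high hT u hv lB tB hnt hjod
      obtain ⟨e1', r1', r2', r3', r4', r5', hB', -⟩ := gg_low hT u s1 lB tB
        (by rw [s3]; omega)
      rw [s2, s3] at e1' r4' r5'
      refine ⟨hτ, by omega, by omega, by omega, hd1, hB⟩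

/-- special facts when there is exactly one big leg -/
lemma broom_QQ (hB1 : (BigF hT u).card = 1) {c : V} (hc : c ∈ BigF hT u) :
    QQ hT u c = 0 := by
  obtain ⟨a, ha⟩ := Finset.card_eq_one.mp hB1
  rw [QQ]
  convert Finset.sum_empty
  rw [Finset.eq_empty_iff_forall_notMem]
  intro x hx
  rw [Finset.mem_filter, ha, Finset.mem_singleton] at hx
  rw [ha, Finset.mem_singleton] at hc
  rw [hc] at hx
  obtain ⟨rfl, h2⟩ := hx
  omega

lemma broom_PP (hB1 : (BigF hT u).card = 1) {c : V} (hc : c ∈ BigF hT u) :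
    legLen hT u c / 2 = PP hT u := by
  obtain ⟨a, ha⟩ := Finset.card_eq_one.mp hB1
  have hsub : BigF hT u ⊆ G.neighborFinset u := Finset.filter_subset _ _
  have hPP : PP hT u = ∑ c' ∈ BigF hT u, legLen hT u c' / 2 := by
    rw [PP]
    apply (Finset.sum_subset hsub ?_).symm
    intro x hx hnx
    have hadj : G.Adj u x := (SimpleGraph.mem_neighborFinset _ _ _).mp hx
    have h1 := legLen_pos hT u hadj
    rw [BigF, Finset.mem_filter] at hnx
    have : ¬ 2 ≤ legLen hT u x := fun h => hnx ⟨hx, h⟩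
    omega
  rw [ha, Finset.mem_singleton] at hc
  rw [hPP, ha, Finset.sum_singleton, hc]

lemma broom_tt (hB1 : (BigF hT u).card = 1) {c : V} (hc : c ∈ O3F hT u) :
    tt hT u c = 1 := by
  have hcB : c ∈ BigF hT u := by
    rw [O3F, Finset.mem_filter] at hc
    rw [BigF, Finset.mem_filter]
    exact ⟨hc.1, hc.2.2⟩
  have hcO : c ∈ OO hT u := by
    rw [O3F, Finset.mem_filter] at hc
    rw [OO, Finset.mem_filter]
    exact ⟨hc.1, hc.2.1⟩
  rw [tt]
  rw [show (OO hT u).filter (fun c' => kap' hT u c' ≤ kap' hT u c) = {c} from ?_]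
  · exact Finset.card_singleton _
  obtain ⟨a, ha⟩ := Finset.card_eq_one.mp hB1
  ext x
  rw [Finset.mem_filter, Finset.mem_singleton]
  constructor
  · rintro ⟨hxO, hxk⟩
    have h2 := (kap_eq_kap'_of_O3 hT u hc).2
    have h3 := rho_lt c
    have h4 := rho_lt x
    have hxbig : 2 ≤ legLen hT u x := by
      by_contra hx2
      rw [kap', if_neg hx2] at hxk
      omega
    have hxB : x ∈ BigF hT u := by
      rw [OO, Finset.mem_filter] at hxO
      rw [BigF, Finset.mem_filter]
      exact ⟨hxO.1, hxbig⟩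
    rw [ha, Finset.mem_singleton] at hxB hcB
    rw [hxB, hcB]
  · rintro rfl
    exact ⟨hcO, le_rfl⟩

include hT in
lemma exists_QQ_zero (hne : (BigF hT u).Nonempty) :
    ∃ c ∈ BigF hT u, QQ hT u c = 0 := by
  obtain ⟨c, hc, hmin⟩ := Finset.exists_min_image (BigF hT u) (kap hT u) hne
  refine ⟨c, hc, ?_⟩
  rw [QQ]
  convert Finset.sum_empty
  rw [Finset.eq_empty_iff_forall_notMem]
  intro x hx
  rw [Finset.mem_filter] at hx
  have := hmin x hx.1
  omega

end Spider

end InternalSums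


section Comparisons

variable {V : Type*} [Fintype V] [DecidableEq V]
variable {G : SimpleGraph V} (hT : G.IsTree) (u : V)

namespace Spider

include hT in
/-- value/bounds for leaf labels -/
lemma leaf_spec (lB tB : ℕ) {v : V} (hv : v ≠ u)
    (hleaf : G.dist u v = legLen hT u (legOf hT u v)) :
    (legLen hT u (legOf hT u v) % 2 = 1 ∧ tB + 1 ≤ gg hT u lB tB v ∧
      gg hT u lB tB v ≤ tB + oo hT u) ∨
    (legLen hT u (legOf hT u v) % 2 = 0 ∧
      gg hT u lB tB v + (QQ hT u (legOf hT u v) + legLen hT u (legOf hT u v) / 2)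
        = lB + PP hT u + 1 ∧
      q3 hT u + 1 ≤ QQ hT u (legOf hT u v) + legLen hT u (legOf hT u v) / 2 ∧
      QQ hT u (legOf hT u v) + legLen hT u (legOf hT u v) / 2 ≤ PP hT u ∧
      legOf hT u v ∈ BigF hT u) := by
  obtain ⟨hN, hd1, hdle, -, hl1⟩ := basic_facts hT u hv
  rcases Nat.mod_two_eq_zero_or_one (legLen hT u (legOf hT u v)) with hev | hod
  · right
    have hjev : G.dist u v % 2 = 0 := by omega
    obtain ⟨e1, r1, r2, r3, r4, r5, hB, -⟩ := gg_low hT u hv lB tB hjev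
    have hq3 := q3_le_QQ_of_even hT u hB hev
    have hj2 : G.dist u v / 2 = legLen hT u (legOf hT u v) / 2 := by rw [hleaf]
    refine ⟨hev, by omega, by omega, by omega, hB⟩
  · left
    obtain ⟨e1, r1, r2, -⟩ := gg_tiny hT u hv lB tB ⟨hod, hleaf⟩
    exact ⟨hod, r1, r2⟩

include hT in
lemma leaf_lt_isum (hdeg : ∀ w : V, w ≠ u → G.degree w ≤ 2) {lB tB : ℕ}
    (hMode : ((BigF hT u).card ≠ 1 ∧ lB = oo hT u ∧ tB = 0) ∨
      ((BigF hT u).card = 1 ∧ lB = 0 ∧ tB = PP hT u))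
    {v v' : V} (hv : v ≠ u) (hv' : v' ≠ u)
    (hleaf : G.dist u v = legLen hT u (legOf hT u v))
    (hint : G.dist u v' < legLen hT u (legOf hT u v')) :
    gg hT u lB tB v
      < gg hT u lB tB v' + gg hT u lB tB (spot hT u (legOf hT u v') (G.dist u v' + 1)) := by
  have hm := mm_eq hT u
  have hq3P := q3_le_PP hT u
  have ho3o := o3_le_oo hT u
  rcases isum_spec hT u lB tB hv' hint with ⟨-, e1, b1, b2, b3, hB'⟩ | ⟨hτ, e1, b1, b2, b3, b4, b5, hO3'⟩
  · -- σ case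
    rcases leaf_spec hT u lB tB hv hleaf with ⟨-, l1, l2⟩ | ⟨-, l1, l2, l3, -⟩
      <;> rcases hMode with ⟨-, rfl, rfl⟩ | ⟨-, rfl, rfl⟩ <;> omega
  · -- τ case
    rcases hMode with ⟨-, rfl, rfl⟩ | ⟨hB1, rfl, rfl⟩
    · rcases leaf_spec hT u (oo hT u) 0 hv hleaf with ⟨-, l1, l2⟩ | ⟨-, l1, l2, l3, -⟩
      · omega
      · omega
    · -- broom mode
      have hcB' : legOf hT u v' ∈ BigF hT u := by
        rw [O3F, Finset.mem_filter] at hO3'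
        rw [BigF, Finset.mem_filter]
        exact ⟨hO3'.1, hO3'.2.2⟩
      have e2 := broom_QQ hT u hB1 hcB'
      have e3 := broom_PP hT u hB1 hcB'
      have e4 := broom_tt hT u hB1 hO3'
      rcases leaf_spec hT u 0 (PP hT u) hv hleaf with ⟨-, l1, l2⟩ | ⟨hev, l1, l2, l3, hBv⟩
      · omega
      · -- leaf on an even big leg: impossible in broom mode with a τ junction
        exfalso
        have : legOf hT u v = legOf hT u v' :=
          Finset.card_le_one.mp (le_of_eq hB1) _ hBv _ hcB'
        rw [O3F, Finset.mem_filter] at hO3'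
        rw [this] at hev
        omega

include hT in
lemma isum_ne (hdeg : ∀ w : V, w ≠ u → G.degree w ≤ 2) {lB tB : ℕ}
    (hMode : ((BigF hT u).card ≠ 1 ∧ lB = oo hT u ∧ tB = 0) ∨
      ((BigF hT u).card = 1 ∧ lB = 0 ∧ tB = PP hT u))
    {v v' : V} (hv : v ≠ u) (hv' : v' ≠ u) (hne : v ≠ v')
    (hint : G.dist u v < legLen hT u (legOf hT u v))
    (hint' : G.dist u v' < legLen hT u (legOf hT u v')) :
    gg hT u lB tB v + gg hT u lB tB (spot hT u (legOf hT u v) (G.dist u v + 1))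
      ≠ gg hT u lB tB v' + gg hT u lB tB (spot hT u (legOf hT u v') (G.dist u v' + 1)) := by
  have hm := mm_eq hT u
  have hq3P := q3_le_PP hT u
  have ho3o := o3_le_oo hT u
  have hkey : ¬(legOf hT u v = legOf hT u v' ∧ G.dist u v = G.dist u v') := by
    rintro ⟨hcc, hjj⟩
    exact hne (leg_depth_inj hT u hdeg (G.dist u v) _ _ hv hv' rfl hjj.symm hcc)
  rcases isum_spec hT u lB tB hv hint with ⟨-, e1, b1, b2, b3, hB⟩ | ⟨hτ, e1, b1, b2, b3, b4, b5, hO3⟩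
  · rcases isum_spec hT u lB tB hv' hint' with ⟨-, e1', b1', b2', b3', hB'⟩ | ⟨hτ', e1', b1', b2', b3', b4', b5', hO3'⟩
    · -- σσ
      by_cases hcc : legOf hT u v = legOf hT u v'
      · rw [hcc] at e1 b1 ⊢
        have hjj : G.dist u v ≠ G.dist u v' := fun h => hkey ⟨hcc, h⟩
        omega
      · rcases lt_trichotomy (kap hT u (legOf hT u v)) (kap hT u (legOf hT u v')) with
          hlt | heq | hlt
        · have := QQ_mono hT u hB hlt
          omega
        · exact absurd (kap_inj hT u heq) hcc
        · have := QQ_mono hT u hB' hlt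
          omega
    · -- σ vs τ
      rcases hMode with ⟨-, rfl, rfl⟩ | ⟨hB1, rfl, rfl⟩
      · omega
      · have hcB' : legOf hT u v' ∈ BigF hT u := by
          rw [O3F, Finset.mem_filter] at hO3'
          rw [BigF, Finset.mem_filter]
          exact ⟨hO3'.1, hO3'.2.2⟩
        have e2 := broom_QQ hT u hB1 hcB'
        have e3 := broom_PP hT u hB1 hcB'
        have e4 := broom_tt hT u hB1 hO3'
        omega
  · rcases isum_spec hT u lB tB hv' hint' with ⟨-, e1', b1', b2', b3', hB'⟩ | ⟨hτ', e1', b1', b2', b3', b4', b5', hO3'⟩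
    · -- τ vs σ
      rcases hMode with ⟨-, rfl, rfl⟩ | ⟨hB1, rfl, rfl⟩
      · omega
      · have hcB : legOf hT u v ∈ BigF hT u := by
          rw [O3F, Finset.mem_filter] at hO3
          rw [BigF, Finset.mem_filter]
          exact ⟨hO3.1, hO3.2.2⟩
        have e2 := broom_QQ hT u hB1 hcB
        have e3 := broom_PP hT u hB1 hcB
        have e4 := broom_tt hT u hB1 hO3
        omega
    · -- ττ
      have hcB : legOf hT u v ∈ BigF hT u := by
        rw [O3F, Finset.mem_filter] at hO3
        rw [BigF, Finset.mem_filter]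
        exact ⟨hO3.1, hO3.2.2⟩
      have hcB' : legOf hT u v' ∈ BigF hT u := by
        rw [O3F, Finset.mem_filter] at hO3'
        rw [BigF, Finset.mem_filter]
        exact ⟨hO3'.1, hO3'.2.2⟩
      have hl2 : 2 ≤ legLen hT u (legOf hT u v) := by
        rw [BigF, Finset.mem_filter] at hcB; exact hcB.2
      have hl2' : 2 ≤ legLen hT u (legOf hT u v') := by
        rw [BigF, Finset.mem_filter] at hcB'; exact hcB'.2
      have hcc : legOf hT u v ≠ legOf hT u v' := by
        intro hcc
        apply hkey
        refine ⟨hcc, ?_⟩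
        rw [hcc] at hτ
        omega
      have hk1 := (kap_eq_kap'_of_O3 hT u hO3).1
      have hk2 := (kap_eq_kap'_of_O3 hT u hO3).2
      have hk1' := (kap_eq_kap'_of_O3 hT u hO3').1
      have hk2' := (kap_eq_kap'_of_O3 hT u hO3').2
      have hOv : legOf hT u v ∈ OO hT u := by
        rw [O3F, Finset.mem_filter] at hO3
        rw [OO, Finset.mem_filter]; exact ⟨hO3.1, hO3.2.1⟩
      have hOv' : legOf hT u v' ∈ OO hT u := by
        rw [O3F, Finset.mem_filter] at hO3'
        rw [OO, Finset.mem_filter]; exact ⟨hO3'.1, hO3'.2.1⟩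
      rcases lt_trichotomy (kap hT u (legOf hT u v)) (kap hT u (legOf hT u v')) with
        hlt | heq | hlt
      · have hQm := QQ_mono hT u hcB hlt
        have htm := tt_mono hT u (c := legOf hT u v) hOv' (by omega)
        omega
      · exact absurd (kap_inj hT u heq) hcc
      · have hQm := QQ_mono hT u hcB' hlt
        have htm := tt_mono hT u (c := legOf hT u v') hOv (by omega)
        omega

include hT in
lemma isum_lt_center (hdeg : ∀ w : V, w ≠ u → G.degree w ≤ 2)
    (hk : 3 ≤ (G.neighborFinset u).card) {lB tB : ℕ}
    (hMode : ((BigF hT u).card ≠ 1 ∧ lB = oo hT u ∧ tB = 0) ∨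
      ((BigF hT u).card = 1 ∧ lB = 0 ∧ tB = PP hT u))
    {v : V} (hv : v ≠ u) (hint : G.dist u v < legLen hT u (legOf hT u v)) :
    gg hT u lB tB v + gg hT u lB tB (spot hT u (legOf hT u v) (G.dist u v + 1))
      < ∑ c ∈ G.neighborFinset u, gg hT u lB tB c := by
  have hm := mm_eq hT u
  have hq3P := q3_le_PP hT u
  have ho3o := o3_le_oo hT u
  have hBsub : BigF hT u ⊆ G.neighborFinset u := Finset.filter_subset _ _
  -- the leg of v is big
  have hcB : legOf hT u v ∈ BigF hT u := by
    rcases isum_spec hT u lB tB hv hint with ⟨-, -, -, -, -, hB⟩ | ⟨-, -, -, -, -, -, -, hO3⟩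
    · exact hB
    · rw [O3F, Finset.mem_filter] at hO3
      rw [BigF, Finset.mem_filter]
      exact ⟨hO3.1, hO3.2.2⟩
  rcases hMode with ⟨hBne, rfl, rfl⟩ | ⟨hB1, rfl, rfl⟩
  · -- general mode : at least two big legs
    have hB2 : 2 ≤ (BigF hT u).card := by
      have : 0 < (BigF hT u).card := Finset.card_pos.mpr ⟨_, hcB⟩
      omega
    obtain ⟨c₁, hc₁, hQ₁⟩ := exists_QQ_zero hT u ⟨_, hcB⟩
    obtain ⟨c₂, hc₂, hne₂⟩ := Finset.exists_mem_ne
      (s := BigF hT u) (by omega) c₁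
    have hl₁ : 2 ≤ legLen hT u c₁ := by
      rw [BigF, Finset.mem_filter] at hc₁; exact hc₁.2
    have hl₂ : 2 ≤ legLen hT u c₂ := by
      rw [BigF, Finset.mem_filter] at hc₂; exact hc₂.2
    have hg₁ : gg hT u (oo hT u) 0 c₁ = mm hT u - QQ hT u c₁ :=
      (gg_top hT u (oo hT u) 0 (hBsub hc₁)).1 hl₁
    have hg₂ : gg hT u (oo hT u) 0 c₂ = mm hT u - QQ hT u c₂ :=
      (gg_top hT u (oo hT u) 0 (hBsub hc₂)).1 hl₂
    have hQ₂ := QQ_le hT u hc₂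
    have hQ₁' := QQ_le hT u hc₁
    have hsum := sum_ge_two (gg hT u (oo hT u) 0) (hBsub hc₁) (hBsub hc₂) (Ne.symm hne₂)
    rcases isum_spec hT u (oo hT u) 0 hv hint with ⟨-, e1, b1, b2, b3, -⟩ |
      ⟨-, e1, b1, b2, b3, b4, -, -⟩ <;> omega
  · -- broom mode
    have hgb : gg hT u 0 (PP hT u) (legOf hT u v) = mm hT u - QQ hT u (legOf hT u v) :=
      (gg_top hT u 0 (PP hT u) (hBsub hcB)).1
        (by rw [BigF, Finset.mem_filter] at hcB; exact hcB.2)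
    have hQb := broom_QQ hT u hB1 hcB
    have hcard : 2 ≤ ((G.neighborFinset u) \ BigF hT u).card := by
      rw [Finset.card_sdiff_of_subset hBsub]
      omega
    obtain ⟨a, ha, b, hb, hab⟩ :=
      (Finset.one_lt_card (s := (G.neighborFinset u) \ BigF hT u)).mp (by omega)
    have hvals : ∀ x ∈ (G.neighborFinset u) \ BigF hT u,
        PP hT u + 1 ≤ gg hT u 0 (PP hT u) x := by
      intro x hx
      obtain ⟨hxN, hxB⟩ := Finset.mem_sdiff.mp hx
      have hadj : G.Adj u x := (SimpleGraph.mem_neighborFinset _ _ _).mp hxN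
      have hlx : legLen hT u x = 1 := by
        have h1 := legLen_pos hT u hadj
        have h2 : ¬ 2 ≤ legLen hT u x := fun h =>
          hxB (Finset.mem_filter.mpr ⟨hxN, h⟩)
        omega
      have := (gg_top hT u 0 (PP hT u) hxN).2 hlx
      have htl : tt hT u x ≤ oo hT u := tt_le hT u
      omega
    have hga := hvals a ha
    have hgb2 := hvals b hb
    have haN := (Finset.mem_sdiff.mp ha).1
    have hbN := (Finset.mem_sdiff.mp hb).1
    have hav : a ≠ legOf hT u v := fun h => (Finset.mem_sdiff.mp ha).2 (h ▸ hcB)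
    have hbv : b ≠ legOf hT u v := fun h => (Finset.mem_sdiff.mp hb).2 (h ▸ hcB)
    have hsum := sum_ge_three (gg hT u 0 (PP hT u)) (hBsub hcB) haN hbN
      (Ne.symm hav) (Ne.symm hbv) hab
    rcases isum_spec hT u 0 (PP hT u) hv hint with ⟨-, e1, b1, b2, b3, -⟩ |
      ⟨-, e1, b1, b2, b3, b4, -, hO3⟩
    · omega
    · have e2 := broom_PP hT u hB1 hcB
      have e3 := broom_tt hT u hB1 hO3
      omega

include hT in
lemma leaf_lt_center (hk : 3 ≤ (G.neighborFinset u).card) {lB tB : ℕ}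
    (hLay : lB = oo hT u ∧ tB = 0 ∨ lB = 0 ∧ tB = PP hT u)
    {v : V} (hv : v ≠ u)
    (hleaf : G.dist u v = legLen hT u (legOf hT u v)) :
    gg hT u lB tB v < ∑ c ∈ G.neighborFinset u, gg hT u lB tB c := by
  obtain ⟨hN, hd1, hdle, -, hl1⟩ := basic_facts hT u hv
  obtain ⟨b, hbN, hbne⟩ := Finset.exists_mem_ne (s := G.neighborFinset u)
    (by omega) (legOf hT u v)
  have hbu : b ≠ u :=
    (G.ne_of_adj ((SimpleGraph.mem_neighborFinset _ _ _).mp hbN)).symm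
  have hgb := gg_pos hT u hbu lB tB
  have hsum := sum_ge_two (gg hT u lB tB) hN hbN (Ne.symm hbne)
  have hle : gg hT u lB tB v ≤ gg hT u lB tB (legOf hT u v) := by
    rcases Nat.lt_or_ge (legLen hT u (legOf hT u v)) 2 with hsmall | hbig
    · -- leg of length 1 : v is the leg vertex itself
      have hd1v : G.dist u v = 1 := by omega
      have : legOf hT u v = v := legOf_depth_one hT u hd1v
      rw [this]
    · have hgtop := (gg_top hT u lB tB hN).1 hbig
      have hBv : legOf hT u v ∈ BigF hT u := Finset.mem_filter.mpr ⟨hN, hbig⟩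
      have hQv := QQ_le hT u hBv
      have hm := mm_eq hT u
      rcases leaf_spec hT u lB tB hv hleaf with ⟨-, l1, l2⟩ | ⟨-, l1, l2, l3, -⟩ <;>
        rcases hLay with ⟨rfl, rfl⟩ | ⟨rfl, rfl⟩ <;> omega
  omega

end Spider

end Comparisons


section Assembly

variable {V : Type*} [Fintype V] [DecidableEq V]
variable {G : SimpleGraph V} (hT : G.IsTree) (u : V)

namespace Spider

include hT in
lemma classify (hdeg : ∀ w : V, w ≠ u → G.degree w ≤ 2) {v : V} (hv : v ≠ u) :
    (G.dist u v = legLen hT u (legOf hT u v) ∧ G.degree v = 1) ∨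
    (G.dist u v < legLen hT u (legOf hT u v) ∧ G.degree v = 2) := by
  have hdle := depth_le_legLen hT u hv
  have hde := degree_eq hT u hv
  rcases lt_or_eq_of_le hdle with hlt | heq
  · right
    refine ⟨hlt, ?_⟩
    rw [hde, chl_of_lt hT u hdeg hv hlt, Finset.card_singleton]
  · left
    refine ⟨heq, ?_⟩
    rw [hde, chl_of_eq hT u hv heq, Finset.card_empty]

include hT in
lemma main (hdeg : ∀ w : V, w ≠ u → G.degree w ≤ 2)
    (hk : 3 ≤ (G.neighborFinset u).card) {lB tB : ℕ}
    (hMode : ((BigF hT u).card ≠ 1 ∧ lB = oo hT u ∧ tB = 0) ∨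
      ((BigF hT u).card = 1 ∧ lB = 0 ∧ tB = PP hT u)) :
    IsStronglyAntimagic G := by
  have hLay : lB = oo hT u ∧ tB = 0 ∨ lB = 0 ∧ tB = PP hT u := by
    rcases hMode with ⟨-, h1, h2⟩ | ⟨-, h1, h2⟩
    exacts [Or.inl ⟨h1, h2⟩, Or.inr ⟨h1, h2⟩]
  refine ⟨ff hT u lB tB, ff_bijOn hT u hdeg hLay, ?_, ?_⟩
  · intro x y hxy
    by_cases hx : x = u <;> by_cases hy : y = u
    · exact absurd (hx.trans hy.symm) hxy
    · rw [hx]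
      rcases classify hT u hdeg hy with ⟨hleaf, -⟩ | ⟨hint, -⟩
      · rw [phi_center hT u lB tB, phi_leaf hT u hy lB tB hleaf]
        exact (leaf_lt_center hT u hk hLay hy hleaf).ne'
      · rw [phi_center hT u lB tB, phi_internal hT u hdeg hy lB tB hint]
        exact (isum_lt_center hT u hdeg hk hMode hy hint).ne'
    · rw [hy]
      rcases classify hT u hdeg hx with ⟨hleaf, -⟩ | ⟨hint, -⟩
      · rw [phi_center hT u lB tB, phi_leaf hT u hx lB tB hleaf]
        exact (leaf_lt_center hT u hk hLay hx hleaf).ne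
      · rw [phi_center hT u lB tB, phi_internal hT u hdeg hx lB tB hint]
        exact (isum_lt_center hT u hdeg hk hMode hx hint).ne
    · rcases classify hT u hdeg hx with ⟨hlx, -⟩ | ⟨hix, -⟩ <;>
        rcases classify hT u hdeg hy with ⟨hly, -⟩ | ⟨hiy, -⟩
      · rw [phi_leaf hT u hx lB tB hlx, phi_leaf hT u hy lB tB hly]
        exact fun hgg => hxy (gg_inj hT u hdeg hLay hx hy hgg)
      · rw [phi_leaf hT u hx lB tB hlx, phi_internal hT u hdeg hy lB tB hiy]
        exact (leaf_lt_isum hT u hdeg hMode hx hy hlx hiy).ne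
      · rw [phi_internal hT u hdeg hx lB tB hix, phi_leaf hT u hy lB tB hly]
        exact (leaf_lt_isum hT u hdeg hMode hy hx hly hix).ne'
      · rw [phi_internal hT u hdeg hx lB tB hix, phi_internal hT u hdeg hy lB tB hiy]
        exact isum_ne hT u hdeg hMode hx hy hxy hix hiy
  · intro x y hlt
    rw [deg_eq, deg_eq] at hlt
    have hku : 3 ≤ G.degree u := by
      rwa [SimpleGraph.card_neighborFinset_eq_degree] at hk
    by_cases hx : x = u
    · rw [hx]
      rw [hx] at hlt
      have hy : y ≠ u := by rintro rfl; omega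
      rcases classify hT u hdeg hy with ⟨hleaf, -⟩ | ⟨hint, -⟩
      · rw [phi_center hT u lB tB, phi_leaf hT u hy lB tB hleaf]
        exact leaf_lt_center hT u hk hLay hy hleaf
      · rw [phi_center hT u lB tB, phi_internal hT u hdeg hy lB tB hint]
        exact isum_lt_center hT u hdeg hk hMode hy hint
    · have hdx := hdeg x hx
      have hy : y ≠ u := by rintro rfl; omega
      rcases classify hT u hdeg hx with ⟨hlx, hdx1⟩ | ⟨hix, hdx2⟩ <;>
        rcases classify hT u hdeg hy with ⟨hly, hdy1⟩ | ⟨hiy, hdy2⟩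
      · omega
      · omega
      · rw [phi_internal hT u hdeg hx lB tB hix, phi_leaf hT u hy lB tB hly]
        exact leaf_lt_isum hT u hdeg hMode hy hx hly hix
      · omega

end Spider

end Assembly


/-- every spider (a tree with exactly one vertex of degree greater
than 2) is strongly antimagic. -/
theorem stmt_8 (G : SimpleGraph V) (hT : G.IsTree)
    (h : ∃! u : V, 2 < deg G u) :
    IsStronglyAntimagic G := by
  obtain ⟨u, hu, huniq⟩ := h
  have hdeg : ∀ w : V, w ≠ u → G.degree w ≤ 2 := by
    intro w hw
    by_contra hcon
    push_neg at hcon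
    exact hw (huniq w (by show 2 < deg G w; rwa [Spider.deg_eq]))
  have hu' : 2 < G.degree u := by rwa [Spider.deg_eq] at hu
  have hk : 3 ≤ (G.neighborFinset u).card := by
    rw [SimpleGraph.card_neighborFinset_eq_degree]; omega
  by_cases hB1 : (Spider.BigF hT u).card = 1
  · exact Spider.main hT u hdeg hk (Or.inr ⟨hB1, rfl, rfl⟩)
  · exact Spider.main hT u hdeg hk (Or.inl ⟨hB1, rfl, rfl⟩)
end
end
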